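/- arXiv:0804.0534 — 14 statements merged into one kernel-verified Lean document; each statement's English description precedes it below -/
import Mathlib

section
/- Let 0 < q < 1 and let (θ_n)_{n∈ℕ} be a sequence of nonnegative real numbers converging to a limit θ ≥ 0. Then the finite products ∏_{i=0}^{n-1} (1 + θ_n q^i) converge, as n → ∞, to the infinite product E_q(θ) = ∏_{i=0}^{∞} (1 + θ q^i). -/
/-!
Extending `θₙ qⁱ` by zero for `i ≥ n` turns the finite products into infinite products whose
factors `1 + θₙ qⁱ` converge factorwise to `1 + θ qⁱ`, and a convergent sequence is bounded,
so all of them are dominated by the summable `C qⁱ`. Tannery's theorem for infinite products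
then gives the limit.
-/

open Filter Finset Topology

theorem tendsto_prod_range_one_add_of_dominated_convergence {R : Type*} [NormedCommRing R]
    [NormOneClass R] [CompleteSpace R] {f : ℕ → ℕ → R} {g : ℕ → R} {bound : ℕ → ℝ}
    (h_sum : Summable bound) (hab : ∀ k, Tendsto (f · k) atTop (𝓝 (g k)))
    (h_bound : ∀ᶠ n in atTop, ∀ k, ‖f n k‖ ≤ bound k) :
    Tendsto (fun n ↦ ∏ k ∈ range n, (1 + f n k)) atTop (𝓝 (∏' k, (1 + g k))) := by
  set F : ℕ → ℕ → R := fun n k ↦ if k < n then f n k else 0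
  have hF : ∀ k, Tendsto (F · k) atTop (𝓝 (g k)) := fun k ↦
    (hab k).congr' <| (eventually_gt_atTop k).mono fun n hn ↦ (if_pos hn).symm
  have hF_bound : ∀ᶠ n in atTop, ∀ k, ‖F n k‖ ≤ bound k := by
    filter_upwards [h_bound] with n hn k
    by_cases hk : k < n
    · simpa [F, hk] using hn k
    · simpa [F, hk] using (norm_nonneg _).trans (hn k)
  refine (tendsto_tprod_one_add_of_dominated_convergence h_sum hF hF_bound).congr fun n ↦ ?_
  rw [tprod_eq_prod (s := range n) fun k hk ↦ by simp [F, not_lt.1 (by simpa using hk)]]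
  exact prod_congr rfl fun k hk ↦ by simp [F, mem_range.1 hk]

theorem kemp_lemma_prod_general (q : ℝ) (hq0 : 0 < q) (hq1 : q < 1)
    (θseq : ℕ → ℝ)
    (θ : ℝ) (hlim : Tendsto θseq atTop (nhds θ)) :
    Tendsto (fun n => ∏ i ∈ range n, (1 + θseq n * q ^ i)) atTop
      (nhds (∏' i : ℕ, (1 + θ * q ^ i))) := by
  obtain ⟨C, hC⟩ := hlim.norm.bddAbove_range
  refine tendsto_prod_range_one_add_of_dominated_convergence
    ((summable_geometric_of_lt_one hq0.le hq1).mul_left C)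
    (fun k ↦ hlim.mul_const _) (Eventually.of_forall fun n k ↦ ?_)
  rw [norm_mul, norm_pow, Real.norm_of_nonneg hq0.le]
  exact mul_le_mul_of_nonneg_right (hC ⟨n, rfl⟩) (by positivity)

/-- For `0 < q < 1` and a sequence `θ n` of nonnegative reals converging to
`θ ≥ 0`, the finite products `∏_{i=0}^{n-1} (1 + θ n * q^i)` converge, as `n → ∞`, to the
infinite product `E_q(θ) = ∏_{i=0}^{∞} (1 + θ * q^i)`. -/
theorem kemp_lemma_prod (q : ℝ) (hq0 : 0 < q) (hq1 : q < 1)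
    (θseq : ℕ → ℝ) (hθnonneg : ∀ n, 0 ≤ θseq n)
    (θ : ℝ) (hθ : 0 ≤ θ) (hlim : Tendsto θseq atTop (nhds θ)) :
    Tendsto (fun n => ∏ i ∈ range n, (1 + θseq n * q ^ i)) atTop
      (nhds (∏' i : ℕ, (1 + θ * q ^ i))) :=
  kemp_lemma_prod_general q hq0 hq1 θseq θ hlim
end

section
/- Fix 0 < q < 1 and λ > 0, and set θ_n = λ / [n − λ]_q where [x]_q = (1 − q^x)/(1 − q). Then for every fixed integer x ≥ 0, the Kemp q-binomial probability P(X_n = x) for X_n ∼ KB(n, θ_n, q) converges as n → ∞ to the Heine probability with parameter (1−q)λ, i.e. [n choose x]_q · θ_n^x · q^{x(x−1)/2} / ∏_{i=0}^{n−1}(1 + θ_n q^i) → q^{x(x−1)/2} ((1−q)λ)^x / (q;q)_x · e_q(−(1−q)λ). -/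
open Filter Finset

/-- The q-shifted factorial `(z;q)_n = ∏_{i=0}^{n-1} (1 - z q^i)`. -/
noncomputable def qPoch (q z : ℝ) (n : ℕ) : ℝ := ∏ i ∈ range n, (1 - z * q ^ i)

/-- The q-binomial coefficient `[n choose k]_q = (q;q)_n / ((q;q)_k (q;q)_{n-k})`. -/
noncomputable def qBinom (q : ℝ) (n k : ℕ) : ℝ := qPoch q q n / (qPoch q q k * qPoch q q (n - k))

/-- The q-exponential `e_q(z) = 1/(z;q)_∞`. -/
noncomputable def qExp (q z : ℝ) : ℝ := (∏' i : ℕ, (1 - z * q ^ i))⁻¹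

/-!
Since `q ^ (n - λ) → 0`, `[n - λ]_q → 1 / (1 - q)` and hence `θ_n → (1 - q) λ`. For `|q| < 1`,
dominated convergence for infinite products (`|θ_n q^i| ≤ C |q|^i` eventually) gives
`∏_{i<n} (1 + θ_n q^i) → ∏' i, (1 + (1 - q) λ q^i) = 1 / e_q(-(1 - q) λ)`, which is nonzero as
all factors are positive. The same argument with constant `θ` shows `(q;q)_n → (q;q)_∞ ≠ 0`, so
`[n choose x]_q = (q;q)_n / ((q;q)_x (q;q)_{n-x}) → 1 / (q;q)_x`.
-/

open Topology

section InfiniteProduct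

variable {R : Type*} [NormedCommRing R] [NormOneClass R] [CompleteSpace R]

theorem tendsto_prod_range_one_add_mul_pow {q a : R} {θ : ℕ → R} (hq : ‖q‖ < 1)
    (hθ : Tendsto θ atTop (𝓝 a)) :
    Tendsto (fun n ↦ ∏ i ∈ range n, (1 + θ n * q ^ i)) atTop (𝓝 (∏' i, (1 + a * q ^ i))) := by
  -- Pad the `n`-th partial product with factors `1` to apply dominated convergence.
  set f : ℕ → ℕ → R := fun n i ↦ if i < n then θ n * q ^ i else 0
  have hf_lim (i : ℕ) : Tendsto (f · i) atTop (𝓝 (a * q ^ i)) :=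
    (hθ.mul_const _).congr' ((eventually_gt_atTop i).mono fun n hn ↦ (if_pos hn).symm)
  have hf_bound : ∀ᶠ n in atTop, ∀ i, ‖f n i‖ ≤ (‖a‖ + 1) * ‖q‖ ^ i := by
    filter_upwards [hθ.norm.eventually (gt_mem_nhds (lt_add_one ‖a‖))] with n hn i
    by_cases hi : i < n
    · calc ‖f n i‖ ≤ ‖θ n‖ * ‖q‖ ^ i := by
            simpa only [f, if_pos hi] using (norm_mul_le _ _).trans (by gcongr; exact norm_pow_le _ _)
        _ ≤ (‖a‖ + 1) * ‖q‖ ^ i := by gcongr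
    · simp only [f, if_neg hi, norm_zero]
      positivity
  refine (tendsto_tprod_one_add_of_dominated_convergence
    ((summable_geometric_of_lt_one (norm_nonneg _) hq).mul_left _) hf_lim hf_bound).congr fun n ↦ ?_
  rw [tprod_eq_prod (s := range n) fun i hi ↦ by simp_all [f]]
  exact prod_congr rfl fun i hi ↦ by simp [f, mem_range.1 hi]

theorem tprod_one_add_mul_pow_ne_zero [NormMulClass R] {q a : R} (hq : ‖q‖ < 1)
    (h : ∀ i, 1 + a * q ^ i ≠ 0) : ∏' i, (1 + a * q ^ i) ≠ 0 :=
  tprod_one_add_ne_zero_of_summable h <|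
    ((summable_geometric_of_lt_one (norm_nonneg _) hq).mul_left ‖a‖).congr fun i ↦ by
      rw [norm_mul, norm_pow]

end InfiniteProduct

section QAnalogues

variable {q : ℝ}

theorem mul_pow_ne_one_of_abs_lt_one (hq : |q| < 1) (i : ℕ) : q * q ^ i ≠ 1 := by
  rw [← pow_succ']
  refine ((le_abs_self _).trans_lt ?_).ne
  rw [abs_pow]
  exact pow_lt_one₀ (abs_nonneg q) hq i.succ_ne_zero

theorem qPoch_ne_zero {z : ℝ} (h : ∀ i, z * q ^ i ≠ 1) (n : ℕ) : qPoch q z n ≠ 0 :=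
  prod_ne_zero_iff.2 fun i _ ↦ sub_ne_zero.2 (h i).symm

theorem tendsto_qPoch_atTop (z : ℝ) (hq : |q| < 1) :
    Tendsto (qPoch q z) atTop (𝓝 (∏' i, (1 - z * q ^ i))) := by
  change Tendsto (fun n ↦ ∏ i ∈ range n, (1 - z * q ^ i)) _ _
  simpa only [qPoch, neg_mul, ← sub_eq_add_neg] using
    tendsto_prod_range_one_add_mul_pow (θ := fun _ ↦ -z) hq tendsto_const_nhds

theorem tendsto_qBinom_atTop (hq : |q| < 1) (k : ℕ) :
    Tendsto (fun n ↦ qBinom q n k) atTop (𝓝 (qPoch q q k)⁻¹) := by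
  have hk : qPoch q q k ≠ 0 := qPoch_ne_zero (mul_pow_ne_one_of_abs_lt_one hq) k
  have hP : ∏' i, (1 - q * q ^ i) ≠ 0 := by
    simpa only [neg_mul, ← sub_eq_add_neg] using
      tprod_one_add_mul_pow_ne_zero (a := -q) hq fun i ↦ by
        rw [neg_mul, ← sub_eq_add_neg]
        exact sub_ne_zero.2 (mul_pow_ne_one_of_abs_lt_one hq i).symm
  have h := (tendsto_qPoch_atTop q hq).div
    (((tendsto_qPoch_atTop q hq).comp (tendsto_sub_atTop_nat k)).const_mul (qPoch q q k))
    (mul_ne_zero hk hP)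
  rwa [mul_comm, ← div_div, div_self hP, one_div] at h

noncomputable def qNumber (q x : ℝ) : ℝ := (1 - q ^ x) / (1 - q)

theorem tendsto_qNumber_atTop (hq₀ : -1 < q) (hq₁ : q < 1) :
    Tendsto (qNumber q) atTop (𝓝 (1 - q)⁻¹) := by
  change Tendsto (fun x ↦ (1 - q ^ x) / (1 - q)) _ _
  simpa using
    ((tendsto_rpow_atTop_of_base_lt_one q hq₀ hq₁).const_sub 1).div_const (1 - q)

theorem tendsto_div_qNumber_natCast_sub_atTop (lam : ℝ) (hq₀ : -1 < q) (hq₁ : q < 1) :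
    Tendsto (fun n : ℕ ↦ lam / qNumber q (n - lam)) atTop (𝓝 ((1 - q) * lam)) := by
  have hshift : Tendsto (fun n : ℕ ↦ (n : ℝ) - lam) atTop atTop :=
    tendsto_atTop_add_const_right _ _ tendsto_natCast_atTop_atTop
  have h := (tendsto_const_nhds (x := lam)).div ((tendsto_qNumber_atTop hq₀ hq₁).comp hshift)
    (inv_ne_zero (sub_ne_zero.2 hq₁.ne'))
  rwa [div_inv_eq_mul, mul_comm] at h

end QAnalogues

/-- With `θ_n = λ / [n - λ]_q`, the Kemp q-binomial probability
`P(X_n = x)` converges, as `n → ∞`, to the Heine probability with parameter `(1-q)·λ`. -/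
theorem kemp_to_heine_qNumber_param (q lam : ℝ) (hq0 : 0 < q) (hq1 : q < 1) (hlam : 0 < lam)
    (θ : ℕ → ℝ) (hθ : ∀ n : ℕ, θ n = lam / ((1 - q ^ ((n : ℝ) - lam)) / (1 - q)))
    (x : ℕ) :
    Tendsto
      (fun n : ℕ =>
        qBinom q n x * θ n ^ x * q ^ (x * (x - 1) / 2) /
          ∏ i ∈ range n, (1 + θ n * q ^ i))
      atTop
      (nhds (q ^ (x * (x - 1) / 2) * ((1 - q) * lam) ^ x / qPoch q q x *
        qExp q (-((1 - q) * lam)))) := by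
  set c := (1 - q) * lam
  have hc : 0 < c := mul_pos (by linarith) hlam
  have hq : |q| < 1 := abs_lt.2 ⟨by linarith, hq1⟩
  have hθ_lim : Tendsto θ atTop (𝓝 c) := by
    rw [funext hθ]
    exact tendsto_div_qNumber_natCast_sub_atTop lam (by linarith) hq1
  have hden_ne : ∏' i, (1 + c * q ^ i) ≠ 0 :=
    tprod_one_add_mul_pow_ne_zero hq fun i ↦ (by positivity : (0 : ℝ) < 1 + c * q ^ i).ne'
  convert (((tendsto_qBinom_atTop hq x).mul (hθ_lim.pow x)).mul_const (q ^ (x * (x - 1) / 2))).div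
    (tendsto_prod_range_one_add_mul_pow hq hθ_lim) hden_ne using 2
  · rfl
  · simp only [qExp, neg_mul, sub_neg_eq_add]
    ring
end

section
/- Let f_n : ℝ → ℝ, n ∈ ℕ, be a sequence of functions, each increasing in x, such that for each n there is a unique solution x_n of f_n(x) = 0. Assume f_n(x) < f_m(x) for all x whenever n < m, and that f_n converges pointwise to a limit function f having a unique zero x̂. Then the sequence (x_n) converges to x̂. -/
open Filter

/-- Let `f n : ℝ → ℝ` be a sequence of increasing functions, each with a
unique zero `x n`, such that `f n < f m` pointwise whenever `n < m`, and such that `f n`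
converges pointwise to a limit `F` having a unique zero `x̂`. Then `x n → x̂`. -/
theorem zero_sequence_converges
    (f : ℕ → ℝ → ℝ) (hmono : ∀ n, Monotone (f n))
    (x : ℕ → ℝ) (hzero : ∀ n, f n (x n) = 0)
    (huniq : ∀ n y, f n y = 0 → y = x n)
    (hlt : ∀ n m, n < m → ∀ t, f n t < f m t)
    (F : ℝ → ℝ) (hF : ∀ t, Tendsto (fun n => f n t) atTop (nhds (F t)))
    (xhat : ℝ) (hFzero : F xhat = 0) (hFuniq : ∀ y, F y = 0 → y = xhat) :
    Tendsto x atTop (nhds xhat) := by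
  -- F is monotone
  have hFmono : Monotone F := fun a b hab =>
    le_of_tendsto_of_tendsto' (hF a) (hF b) (fun n => hmono n hab)
  -- each f n xhat ≤ 0
  have hle0 : ∀ n, f n xhat ≤ 0 := by
    intro n
    rw [← hFzero]
    refine ge_of_tendsto (hF xhat) ?_
    filter_upwards [eventually_ge_atTop n] with m hm
    rcases eq_or_lt_of_le hm with h | h
    · rw [h]
    · exact (hlt n m h xhat).le
  have hneg : ∀ n, f n xhat < 0 := fun n =>
    lt_of_lt_of_le (hlt n (n+1) (Nat.lt_succ_self n) xhat) (hle0 (n+1))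
  -- xhat ≤ x n
  have hgex : ∀ n, xhat ≤ x n := by
    intro n
    by_contra h
    push_neg at h
    have := hmono n h.le
    rw [hzero n] at this
    exact absurd (lt_of_le_of_lt this (hneg n)) (lt_irrefl 0)
  -- x antitone
  have hanti : Antitone x := by
    refine antitone_nat_of_succ_le fun n => ?_
    by_contra h
    push_neg at h
    have h1 : f n (x n) ≤ f n (x (n+1)) := hmono n h.le
    have h2 : f n (x (n+1)) < f (n+1) (x (n+1)) := hlt n (n+1) (Nat.lt_succ_self n) _
    rw [hzero n, hzero (n+1)] at *
    exact absurd (lt_of_le_of_lt h1 h2) (lt_irrefl 0)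
  have hbdd : BddBelow (Set.range x) := ⟨xhat, fun y ⟨n, hn⟩ => hn ▸ hgex n⟩
  have htendsL : Tendsto x atTop (nhds (⨅ n, x n)) := tendsto_atTop_ciInf hanti hbdd
  have hL : (⨅ n, x n) = xhat := by
    have hge : xhat ≤ ⨅ n, x n := le_ciInf hgex
    rcases eq_or_lt_of_le hge with h | h
    · exact h.symm
    · exfalso
      set L := ⨅ n, x n with hLdef
      set t := (xhat + L) / 2 with ht
      have ht1 : xhat < t := by rw [ht]; linarith
      have ht2 : t < L := by rw [ht]; linarith
      have htx : ∀ n, t ≤ x n := fun n => le_trans ht2.le (ciInf_le hbdd n)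
      have hft : ∀ n, f n t ≤ 0 := by
        intro n
        have := hmono n (htx n)
        rwa [hzero n] at this
      have hFt : F t ≤ 0 := le_of_tendsto (hF t) (Eventually.of_forall hft)
      have hFt' : 0 ≤ F t := hFzero ▸ hFmono ht1.le
      have : t = xhat := hFuniq t (le_antisymm hFt hFt')
      linarith
  rwa [hL] at htendsL
end

section
/- Fix 0 < q < 1 and μ > 0. Let θ_n(q) be the unique positive solution of ∑_{i=0}^{n−1} θ q^i/(1+θ q^i) = μ (which exists for n ≥ 2μ), and let θ(q) be the unique positive solution of ∑_{i=0}^{∞} θ q^i/(1+θ q^i) = μ. Then θ_n(q) → θ(q) as n → ∞, and consequently, for every fixed integer x ≥ 0, the probability P(X_n = x) under KB(n, θ_n(q), q) converges to the Heine probability q^{x(x−1)/2} θ(q)^x/(q;q)_x · e_q(−θ(q)). -/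
/-!
The finite mean `t ↦ ∑_{i<n} t qⁱ/(1 + t qⁱ)` is increasing in `t` and lies strictly below the
infinite mean, to which it converges. Hence `θ ≤ θₙ`, while for `a > θ` the finite mean at `a`
eventually exceeds `μ`, forcing `θₙ < a`. For the probabilities, `[n choose x]_q → 1/(q;q)_x`,
and `(-θₙ;q)_n → (-θ;q)_∞` because `t ↦ ∑_{i<n} log (1 + t qⁱ)` is Lipschitz with constant
`∑ qⁱ`, uniformly in `n`.
-/

open Filter Finset

open Topology

lemma strictMonoOn_div_one_add : StrictMonoOn (fun x : ℝ => x / (1 + x)) (Set.Ici 0) := by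
  intro a (ha : 0 ≤ a) b (hb : 0 ≤ b) hab
  rw [div_lt_div_iff₀ (by linarith) (by linarith)]
  linarith

lemma abs_log_one_add_sub_log_one_add_le {a b : ℝ} (ha : 0 ≤ a) (hb : 0 ≤ b) :
    |Real.log (1 + b) - Real.log (1 + a)| ≤ |b - a| := by
  have key : ∀ u v : ℝ, 0 ≤ u → 0 ≤ v → Real.log (1 + v) - Real.log (1 + u) ≤ |v - u| := by
    intro u v hu hv
    rw [← Real.log_div (by positivity) (by positivity)]
    calc Real.log ((1 + v) / (1 + u)) ≤ (1 + v) / (1 + u) - 1 :=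
          Real.log_le_sub_one_of_pos (by positivity)
      _ = (v - u) / (1 + u) := by field_simp; ring
      _ ≤ |v - u| / (1 + u) := by gcongr; exact le_abs_self _
      _ ≤ |v - u| := div_le_self (abs_nonneg _) (by linarith)
  rw [abs_sub_le_iff]
  exact ⟨key a b ha hb, abs_sub_comm a b ▸ key b a hb ha⟩

section Mean

variable {q : ℝ}

/-- The mean of the Kemp distribution `KB(n, t, q)`. -/
noncomputable def kempMean (q t : ℝ) (n : ℕ) : ℝ := ∑ i ∈ range n, t * q ^ i / (1 + t * q ^ i)

/-- The mean of the Heine distribution `H(t)`. -/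
noncomputable def heineMean (q t : ℝ) : ℝ := ∑' i : ℕ, t * q ^ i / (1 + t * q ^ i)

lemma strictMonoOn_meanTerm (hq : 0 < q) (i : ℕ) :
    StrictMonoOn (fun t : ℝ => t * q ^ i / (1 + t * q ^ i)) (Set.Ici 0) := by
  intro a (ha : 0 ≤ a) b (hb : 0 ≤ b) hab
  have hqi := pow_pos hq i
  exact strictMonoOn_div_one_add (by positivity : 0 ≤ a * q ^ i) (by positivity : 0 ≤ b * q ^ i)
    (mul_lt_mul_of_pos_right hab hqi)

lemma meanTerm_nonneg (hq : 0 ≤ q) {t : ℝ} (ht : 0 ≤ t) (i : ℕ) :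
    0 ≤ t * q ^ i / (1 + t * q ^ i) := by
  positivity

lemma summable_meanTerm (hq0 : 0 ≤ q) (hq1 : q < 1) {t : ℝ} (ht : 0 ≤ t) :
    Summable fun i : ℕ => t * q ^ i / (1 + t * q ^ i) :=
  .of_nonneg_of_le (meanTerm_nonneg hq0 ht)
    (fun i => div_le_self (by positivity) (by nlinarith [pow_nonneg hq0 i]))
    ((summable_geometric_of_lt_one hq0 hq1).mul_left t)

lemma monotoneOn_kempMean (hq : 0 < q) (n : ℕ) : MonotoneOn (kempMean q · n) (Set.Ici 0) :=
  fun _ ha _ hb hab => sum_le_sum fun i _ => (strictMonoOn_meanTerm hq i).monotoneOn ha hb hab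

lemma strictMonoOn_heineMean (hq0 : 0 < q) (hq1 : q < 1) :
    StrictMonoOn (heineMean q) (Set.Ici 0) :=
  fun _ ha _ hb hab =>
    Summable.tsum_lt_tsum_of_nonneg (i := 0) (meanTerm_nonneg hq0.le ha)
      (fun i => (strictMonoOn_meanTerm hq0 i).monotoneOn ha hb hab.le)
      (strictMonoOn_meanTerm hq0 0 ha hb hab) (summable_meanTerm hq0.le hq1 hb)

lemma tendsto_kempMean (hq0 : 0 ≤ q) (hq1 : q < 1) {t : ℝ} (ht : 0 ≤ t) :
    Tendsto (kempMean q t) atTop (𝓝 (heineMean q t)) :=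
  (summable_meanTerm hq0 hq1 ht).hasSum.tendsto_sum_nat

lemma kempMean_lt_heineMean (hq0 : 0 < q) (hq1 : q < 1) {t : ℝ} (ht : 0 < t) (n : ℕ) :
    kempMean q t n < heineMean q t := by
  have hs := summable_meanTerm hq0.le hq1 ht.le
  rw [heineMean, ← hs.sum_add_tsum_nat_add n, kempMean, lt_add_iff_pos_right]
  exact ((summable_nat_add_iff n).2 hs).tsum_pos (fun i => meanTerm_nonneg hq0.le ht.le _) 0
    (by positivity)

lemma le_of_kempMean_eq_heineMean (hq0 : 0 < q) (hq1 : q < 1) {s t : ℝ} {n : ℕ} (hs : 0 ≤ s)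
    (ht : 0 < t) (h : kempMean q s n = heineMean q t) : t ≤ s := by
  by_contra! hst
  have := monotoneOn_kempMean hq0 n hs ht.le hst.le
  linarith [kempMean_lt_heineMean hq0 hq1 ht n]

theorem tendsto_of_kempMean_eq_heineMean (hq0 : 0 < q) (hq1 : q < 1) {θn : ℕ → ℝ} {θ : ℝ}
    (hθ : 0 < θ) (hθn : ∀ᶠ n in atTop, 0 ≤ θn n ∧ kempMean q (θn n) n = heineMean q θ) :
    Tendsto θn atTop (𝓝 θ) := by
  refine tendsto_order.2 ⟨fun a ha => ?_, fun a ha => ?_⟩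
  · filter_upwards [hθn] with n ⟨hpos, hn⟩
    exact ha.trans_le (le_of_kempMean_eq_heineMean hq0 hq1 hpos hθ hn)
  · have hlt : heineMean q θ < heineMean q a :=
      strictMonoOn_heineMean hq0 hq1 hθ.le (hθ.trans ha).le ha
    filter_upwards [hθn, (tendsto_kempMean hq0.le hq1 (hθ.trans ha).le).eventually_const_lt hlt]
      with n ⟨hpos, hn⟩ hgt
    by_contra! hle
    have := monotoneOn_kempMean hq0 n (hθ.trans ha).le hpos hle
    linarith

end Mean

section Product

variable {c : ℕ → ℝ}

lemma abs_sum_log_one_add_mul_sub_le (hc : ∀ i, 0 ≤ c i) (hcs : Summable c) {s t : ℝ}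
    (hs : 0 ≤ s) (ht : 0 ≤ t) (n : ℕ) :
    |∑ i ∈ range n, Real.log (1 + s * c i) - ∑ i ∈ range n, Real.log (1 + t * c i)|
      ≤ |s - t| * ∑' i, c i :=
  calc |∑ i ∈ range n, Real.log (1 + s * c i) - ∑ i ∈ range n, Real.log (1 + t * c i)|
      ≤ ∑ i ∈ range n, |Real.log (1 + s * c i) - Real.log (1 + t * c i)| := by
        rw [← sum_sub_distrib]; exact abs_sum_le_sum_abs _ _
    _ ≤ ∑ i ∈ range n, |s - t| * c i := by
        gcongr with i
        have hci := hc i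
        calc _ ≤ |s * c i - t * c i| :=
              abs_log_one_add_sub_log_one_add_le (by positivity) (by positivity)
          _ = |s - t| * c i := by rw [← sub_mul, abs_mul, abs_of_nonneg hci]
    _ ≤ |s - t| * ∑' i, c i := by
        rw [← mul_sum]; gcongr; exact hcs.sum_le_tsum _ fun i _ => hc i

theorem tendsto_prod_range_one_add_mul (hc : ∀ i, 0 ≤ c i) (hcs : Summable c) {t : ℕ → ℝ}
    {t₀ : ℝ} (ht : Tendsto t atTop (𝓝 t₀)) (ht0 : ∀ᶠ n in atTop, 0 ≤ t n) :
    Tendsto (fun n => ∏ i ∈ range n, (1 + t n * c i)) atTop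
      (𝓝 (Real.exp (∑' i, Real.log (1 + t₀ * c i)))) := by
  have ht₀ : 0 ≤ t₀ := ge_of_tendsto ht ht0
  have hlog : Tendsto (fun n => ∑ i ∈ range n, Real.log (1 + t₀ * c i)) atTop
      (𝓝 (∑' i, Real.log (1 + t₀ * c i))) :=
    (Real.summable_log_one_add_of_summable (hcs.mul_left t₀)).hasSum.tendsto_sum_nat
  have hdiff : Tendsto (fun n => ∑ i ∈ range n, Real.log (1 + t n * c i)
      - ∑ i ∈ range n, Real.log (1 + t₀ * c i)) atTop (𝓝 0) := by
    refine squeeze_zero_norm' (a := fun n => |t n - t₀| * ∑' i, c i) ?_ ?_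
    · filter_upwards [ht0] with n hn
      exact abs_sum_log_one_add_mul_sub_le hc hcs hn ht₀ n
    · simpa using ((ht.sub_const t₀).abs).mul_const (∑' i, c i)
  refine ((Real.continuous_exp.tendsto _).comp
    (by simpa using hdiff.add hlog)).congr' ?_
  filter_upwards [ht0] with n hn
  rw [Function.comp_apply, Real.exp_sum]
  exact prod_congr rfl fun i _ => Real.exp_log (by nlinarith [hc i])

end Product

section QAnalogues

variable {q : ℝ}

lemma qPoch_pos (hq0 : 0 ≤ q) (hq1 : q < 1) (n : ℕ) : 0 < qPoch q q n :=
  prod_pos fun i _ => by nlinarith [pow_le_one₀ hq0 hq1.le (n := i), pow_nonneg hq0 i]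

lemma qPoch_add (z : ℝ) (m k : ℕ) :
    qPoch q z (m + k) = qPoch q z m * ∏ j ∈ range k, (1 - z * q ^ (m + j)) :=
  prod_range_add _ m k

lemma tendsto_qBinom (hq0 : 0 ≤ q) (hq1 : q < 1) (k : ℕ) :
    Tendsto (qBinom q · k) atTop (𝓝 (qPoch q q k)⁻¹) := by
  rw [← tendsto_add_atTop_iff_nat k]
  have hform : ∀ m, qBinom q (m + k) k = (∏ j ∈ range k, (1 - q * q ^ (m + j))) / qPoch q q k := by
    intro m
    have := (qPoch_pos hq0 hq1 m).ne'
    rw [qBinom, Nat.add_sub_cancel, qPoch_add]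
    field_simp
  simp only [hform]
  have hpow : Tendsto (fun m => q ^ m) atTop (𝓝 0) := tendsto_pow_atTop_nhds_zero_of_lt_one hq0 hq1
  have hprod : Tendsto (fun m => ∏ j ∈ range k, (1 - q * q ^ (m + j))) atTop (𝓝 1) := by
    have := tendsto_finsetProd (range k) fun j _ =>
      (tendsto_const_nhds (x := (1 : ℝ))).sub
        ((tendsto_const_nhds (x := q)).mul (hpow.comp (tendsto_add_atTop_nat j)))
    simpa using this
  simpa using hprod.div_const (qPoch q q k)

lemma qExp_neg (hq0 : 0 ≤ q) (hq1 : q < 1) {t : ℝ} (ht : 0 ≤ t) :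
    qExp q (-t) = (Real.exp (∑' i, Real.log (1 + t * q ^ i)))⁻¹ := by
  rw [qExp, Real.rexp_tsum_eq_tprod (fun i => by positivity)
    (Real.summable_log_one_add_of_summable
      ((summable_geometric_of_lt_one hq0 hq1).mul_left t))]
  simp only [neg_mul, sub_neg_eq_add]

end QAnalogues

theorem kemp_to_heine_constant_mean_general (q μ : ℝ) (hq0 : 0 < q) (hq1 : q < 1)
    (θn : ℕ → ℝ)
    (hθn : ∀ n : ℕ, 2 * μ ≤ n →
      0 < θn n ∧ ∑ i ∈ range n, θn n * q ^ i / (1 + θn n * q ^ i) = μ)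
    (θ : ℝ) (hθpos : 0 < θ) (hθ : ∑' i : ℕ, θ * q ^ i / (1 + θ * q ^ i) = μ) :
    Tendsto θn atTop (nhds θ) ∧
      ∀ x : ℕ,
        Tendsto
          (fun n : ℕ =>
            qBinom q n x * θn n ^ x * q ^ (x * (x - 1) / 2) /
              ∏ i ∈ range n, (1 + θn n * q ^ i))
          atTop
          (nhds (q ^ (x * (x - 1) / 2) * θ ^ x / qPoch q q x * qExp q (-θ))) := by
  have hroots : ∀ᶠ n in atTop, 0 ≤ θn n ∧ kempMean q (θn n) n = heineMean q θ := by
    filter_upwards [tendsto_natCast_atTop_atTop.eventually_ge_atTop (2 * μ)] with n hn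
    exact ⟨(hθn n hn).1.le, (hθn n hn).2.trans hθ.symm⟩
  have hlim := tendsto_of_kempMean_eq_heineMean hq0 hq1 hθpos hroots
  refine ⟨hlim, fun x => ?_⟩
  have hprod := tendsto_prod_range_one_add_mul (fun i => (pow_pos hq0 i).le)
    (summable_geometric_of_lt_one hq0.le hq1) hlim (hroots.mono fun _ h => h.1)
  convert (((tendsto_qBinom hq0.le hq1 x).mul (hlim.pow x)).mul_const
    (q ^ (x * (x - 1) / 2))).div hprod (Real.exp_ne_zero _) using 2
  · rfl
  rw [qExp_neg hq0.le hq1 hθpos.le]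
  ring

/-- If `θₙ(q)` is the unique positive solution of the finite mean equation
`∑_{i=0}^{n-1} θ q^i/(1+θ q^i) = μ` (for `n ≥ 2μ`) and `θ(q)` the unique positive solution
of the infinite mean equation `∑_{i=0}^∞ θ q^i/(1+θ q^i) = μ`, then `θₙ(q) → θ(q)`, and
for every fixed `x ≥ 0` the Kemp probability `P(Xₙ = x)` converges to the Heine probability
with parameter `θ(q)`. -/
theorem kemp_to_heine_constant_mean (q μ : ℝ) (hq0 : 0 < q) (hq1 : q < 1) (hμ : 0 < μ)
    (θn : ℕ → ℝ)
    (hθn : ∀ n : ℕ, 2 * μ ≤ n →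
      0 < θn n ∧ ∑ i ∈ range n, θn n * q ^ i / (1 + θn n * q ^ i) = μ)
    (θ : ℝ) (hθpos : 0 < θ) (hθ : ∑' i : ℕ, θ * q ^ i / (1 + θ * q ^ i) = μ)
    (hθuniq : ∀ θ' : ℝ, 0 < θ' → ∑' i : ℕ, θ' * q ^ i / (1 + θ' * q ^ i) = μ → θ' = θ) :
    Tendsto θn atTop (nhds θ) ∧
      ∀ x : ℕ,
        Tendsto
          (fun n : ℕ =>
            qBinom q n x * θn n ^ x * q ^ (x * (x - 1) / 2) /
              ∏ i ∈ range n, (1 + θn n * q ^ i))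
          atTop
          (nhds (q ^ (x * (x - 1) / 2) * θ ^ x / qPoch q q x * qExp q (-θ))) :=
  kemp_to_heine_constant_mean_general q μ hq0 hq1 θn hθn θ hθpos hθ
end

section
/- Fix μ > 0 and an integer n ≥ 2μ. For 0 < q < 1 let θ_n(q) be the unique positive solution of ∑_{i=0}^{n−1} θ q^i/(1+θ q^i) = μ. Then as q → 1⁻, θ_n(q) converges to μ/(n − μ); equivalently, θ_n(q)/(1 + θ_n(q)) → μ/n. -/
/-! With `f x = x / (1 + x)` increasing on `[0, ∞)`, the summands lie between the last and the
first one, so `n f(θ q^(n-1)) ≤ μ ≤ n f(θ)`; in particular `μ < n`, as `f < 1`. Solving for `θ`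
gives `μ / (n - μ) ≤ θ ≤ μ / (n - μ) / q^(n-1)`, and both bounds tend to `μ / (n - μ)`. -/

open Filter Finset

theorem monotoneOn_div_one_add : MonotoneOn (fun x : ℝ => x / (1 + x)) (Set.Ici 0) := by
  intro x hx y hy hxy
  simp only [Set.mem_Ici] at hx hy
  rw [div_le_div_iff₀ (by linarith) (by linarith)]
  linarith

section SumBounds

variable {t q : ℝ} (ht : 0 ≤ t) (hq₀ : 0 ≤ q) (hq₁ : q ≤ 1)
include ht hq₀ hq₁

theorem sum_div_one_add_le_card_mul (n : ℕ) :
    ∑ i ∈ range n, t * q ^ i / (1 + t * q ^ i) ≤ n * (t / (1 + t)) := by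
  simpa only [card_range, nsmul_eq_mul] using
    sum_le_card_nsmul (range n) _ _ fun i _ =>
      monotoneOn_div_one_add (mul_nonneg ht (pow_nonneg hq₀ i)) ht
        (mul_le_of_le_one_right ht (pow_le_one₀ hq₀ hq₁))

theorem card_mul_le_sum_div_one_add (n : ℕ) :
    n * (t * q ^ (n - 1) / (1 + t * q ^ (n - 1))) ≤ ∑ i ∈ range n, t * q ^ i / (1 + t * q ^ i) := by
  simpa only [card_range, nsmul_eq_mul] using
    card_nsmul_le_sum (range n) _ _ fun i hi =>
      monotoneOn_div_one_add (mul_nonneg ht (pow_nonneg hq₀ _)) (mul_nonneg ht (pow_nonneg hq₀ i))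
        (mul_le_mul_of_nonneg_left
          (pow_le_pow_of_le_one hq₀ hq₁ (Nat.le_sub_one_of_lt (mem_range.mp hi))) ht)

end SumBounds

section Odds

variable {μ n x : ℝ} (hμn : μ < n)
include hμn

theorem mul_div_one_add_le_iff (hx : 0 ≤ x) : n * (x / (1 + x)) ≤ μ ↔ x ≤ μ / (n - μ) := by
  rw [mul_div_assoc', div_le_iff₀ (by linarith), le_div_iff₀ (by linarith)]
  constructor <;> intro h <;> linarith

theorem le_mul_div_one_add_iff (hx : 0 ≤ x) : μ ≤ n * (x / (1 + x)) ↔ μ / (n - μ) ≤ x := by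
  rw [mul_div_assoc', le_div_iff₀ (by linarith), div_le_iff₀ (by linarith)]
  constructor <;> intro h <;> linarith

theorem div_sub_div_one_add_eq_div : μ / (n - μ) / (1 + μ / (n - μ)) = μ / n := by
  have : n - μ ≠ 0 := by linarith
  field_simp
  ring

end Odds

theorem lt_of_sum_div_one_add_eq {μ t q : ℝ} {n : ℕ} (hμ : 0 < μ) (ht : 0 ≤ t) (hq : q ∈ Set.Icc 0 1)
    (hsum : ∑ i ∈ range n, t * q ^ i / (1 + t * q ^ i) = μ) : μ < n := by
  have hle := hsum ▸ sum_div_one_add_le_card_mul ht hq.1 hq.2 n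
  have hlt : t / (1 + t) < 1 := (div_lt_one (by linarith)).mpr (by linarith)
  have hnonneg : 0 ≤ t / (1 + t) := by positivity
  by_contra! hnμ
  nlinarith [mul_le_mul_of_nonneg_right hnμ hnonneg]

theorem div_sub_le_and_le_div_pow_of_sum_eq {μ t q : ℝ} {n : ℕ} (hμn : μ < n) (ht : 0 ≤ t)
    (hq : q ∈ Set.Ioc 0 1) (hsum : ∑ i ∈ range n, t * q ^ i / (1 + t * q ^ i) = μ) :
    μ / (n - μ) ≤ t ∧ t ≤ μ / (n - μ) / q ^ (n - 1) := by
  have hq₀ := hq.1.le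
  refine ⟨(le_mul_div_one_add_iff hμn ht).mp (hsum ▸ sum_div_one_add_le_card_mul ht hq₀ hq.2 n), ?_⟩
  rw [le_div_iff₀ (pow_pos hq.1 _)]
  exact (mul_div_one_add_le_iff hμn (mul_nonneg ht (pow_nonneg hq₀ _))).mp
    (hsum ▸ card_mul_le_sum_div_one_add ht hq₀ hq.2 n)

theorem theta_tendsto_of_q_to_one_general (μ : ℝ) (hμ : 0 < μ) (n : ℕ)
    (θ : ℝ → ℝ)
    (hθ : ∀ q ∈ Set.Ioo (0 : ℝ) 1,
      0 < θ q ∧ ∑ i ∈ range n, θ q * q ^ i / (1 + θ q * q ^ i) = μ) :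
    Tendsto θ (nhdsWithin 1 (Set.Ioo (0 : ℝ) 1)) (nhds (μ / ((n : ℝ) - μ))) ∧
      Tendsto (fun q => θ q / (1 + θ q)) (nhdsWithin 1 (Set.Ioo (0 : ℝ) 1))
        (nhds (μ / (n : ℝ))) := by
  have hhalf : (1 / 2 : ℝ) ∈ Set.Ioo 0 1 := by norm_num
  have hμn : μ < n :=
    lt_of_sum_div_one_add_eq hμ (hθ _ hhalf).1.le (Set.Ioo_subset_Icc_self hhalf) (hθ _ hhalf).2
  set a := μ / ((n : ℝ) - μ)
  have hbounds : ∀ q ∈ Set.Ioo (0 : ℝ) 1, a ≤ θ q ∧ θ q ≤ a / q ^ (n - 1) := fun q hq =>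
    div_sub_le_and_le_div_pow_of_sum_eq hμn (hθ q hq).1.le (Set.Ioo_subset_Ioc_self hq) (hθ q hq).2
  have hupper : Tendsto (fun q : ℝ => a / q ^ (n - 1)) (nhdsWithin 1 (Set.Ioo 0 1)) (nhds a) := by
    have : ContinuousAt (fun q : ℝ => a / q ^ (n - 1)) 1 := by fun_prop (disch := norm_num)
    simpa using this.tendsto.mono_left nhdsWithin_le_nhds
  have hlim : Tendsto θ (nhdsWithin 1 (Set.Ioo 0 1)) (nhds a) :=
    tendsto_of_tendsto_of_tendsto_of_le_of_le' tendsto_const_nhds hupper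
      (eventually_nhdsWithin_of_forall fun q hq => (hbounds q hq).1)
      (eventually_nhdsWithin_of_forall fun q hq => (hbounds q hq).2)
  refine ⟨hlim, ?_⟩
  have hodds := hlim.div (tendsto_const_nhds.add hlim) (by positivity : (1 : ℝ) + a ≠ 0)
  rwa [div_sub_div_one_add_eq_div hμn] at hodds

/-- Fix `μ > 0` and `n ≥ 2μ`. If, for each `0 < q < 1`, `θ q` is the
(unique) positive solution of `∑_{i=0}^{n-1} θ q^i/(1+θ q^i) = μ`, then `θ q → μ/(n-μ)` as
`q → 1⁻`; equivalently `θ q / (1 + θ q) → μ/n`. -/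
theorem theta_tendsto_of_q_to_one (μ : ℝ) (hμ : 0 < μ) (n : ℕ) (hn : 2 * μ ≤ n)
    (θ : ℝ → ℝ)
    (hθ : ∀ q ∈ Set.Ioo (0 : ℝ) 1,
      0 < θ q ∧ ∑ i ∈ range n, θ q * q ^ i / (1 + θ q * q ^ i) = μ) :
    Tendsto θ (nhdsWithin 1 (Set.Ioo (0 : ℝ) 1)) (nhds (μ / ((n : ℝ) - μ))) ∧
      Tendsto (fun q => θ q / (1 + θ q)) (nhdsWithin 1 (Set.Ioo (0 : ℝ) 1))
        (nhds (μ / (n : ℝ))) :=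
  theta_tendsto_of_q_to_one_general μ hμ n θ hθ
end

section
/- Fix μ > 0. For each 0 < q < 1 let θ(q) be the unique positive solution of ∑_{i=0}^{∞} θ q^i/(1+θ q^i) = μ. Then θ(q)/(1 − q) → μ as q → 1⁻. -/
open Filter

lemma heine_key (μ : ℝ) (q t : ℝ) (hq0 : 0 < q) (hq1 : q < 1)
    (ht0 : 0 < t) (hsum : ∑' i : ℕ, t * q ^ i / (1 + t * q ^ i) = μ) :
    μ ≤ t / (1 - q) ∧ t / (1 - q) ≤ μ * (1 + t) := by
  have h1q : 0 < 1 - q := by linarith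
  have hterm_pos : ∀ i : ℕ, 0 < t * q ^ i := fun i => mul_pos ht0 (pow_pos hq0 i)
  have hle : ∀ i : ℕ, t * q ^ i / (1 + t * q ^ i) ≤ t * q ^ i := fun i => by
    rw [div_le_iff₀ (by nlinarith [hterm_pos i])]
    nlinarith [hterm_pos i, sq_nonneg (t * q ^ i)]
  have hsummable_geo : Summable (fun i : ℕ => t * q ^ i) :=
    (summable_geometric_of_lt_one hq0.le hq1).mul_left t
  have hsummable : Summable (fun i : ℕ => t * q ^ i / (1 + t * q ^ i)) :=
    Summable.of_nonneg_of_le (fun i => by positivity) hle hsummable_geo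
  have hgeo : ∑' i : ℕ, t * q ^ i = t / (1 - q) := by
    rw [tsum_mul_left, tsum_geometric_of_lt_one hq0.le hq1]
    field_simp
  constructor
  · calc μ = ∑' i : ℕ, t * q ^ i / (1 + t * q ^ i) := hsum.symm
      _ ≤ ∑' i : ℕ, t * q ^ i := Summable.tsum_le_tsum hle hsummable hsummable_geo
      _ = t / (1 - q) := hgeo
  · have hlow : ∀ i : ℕ, t * q ^ i / (1 + t) ≤ t * q ^ i / (1 + t * q ^ i) := fun i => by
      have hpow : q ^ i ≤ 1 := pow_le_one₀ hq0.le hq1.le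
      gcongr
      all_goals nlinarith [hterm_pos i, ht0, hpow]
    have hsum_low : ∑' i : ℕ, t * q ^ i / (1 + t) = (t / (1 - q)) / (1 + t) := by
      rw [tsum_div_const, hgeo]
    have hmono : (t / (1 - q)) / (1 + t) ≤ μ := by
      calc (t / (1 - q)) / (1 + t) = ∑' i : ℕ, t * q ^ i / (1 + t) := hsum_low.symm
        _ ≤ ∑' i : ℕ, t * q ^ i / (1 + t * q ^ i) :=
            Summable.tsum_le_tsum hlow (hsummable_geo.div_const _) hsummable
        _ = μ := hsum
    rw [div_le_iff₀ (by linarith)] at hmono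
    linarith

/-- Fix `μ > 0`. If, for each `0 < q < 1`, `θ q` is the (unique) positive
solution of `∑_{i=0}^{∞} θ q^i/(1+θ q^i) = μ`, then `θ q / (1 - q) → μ` as `q → 1⁻`. -/
theorem heine_theta_normalized_tendsto (μ : ℝ) (hμ : 0 < μ)
    (θ : ℝ → ℝ)
    (hθ : ∀ q ∈ Set.Ioo (0 : ℝ) 1,
      0 < θ q ∧ ∑' i : ℕ, θ q * q ^ i / (1 + θ q * q ^ i) = μ) :
    Tendsto (fun q => θ q / (1 - q)) (nhdsWithin 1 (Set.Ioo (0 : ℝ) 1)) (nhds μ) := by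
  have hmem : ∀ᶠ q in nhdsWithin (1 : ℝ) (Set.Ioo (0 : ℝ) 1), q ∈ Set.Ioo (0 : ℝ) 1 :=
    eventually_mem_nhdsWithin
  have hclose : ∀ᶠ q in nhdsWithin (1 : ℝ) (Set.Ioo (0 : ℝ) 1), 1 - 1 / (2 * μ) < q := by
    apply eventually_nhdsWithin_of_eventually_nhds
    apply eventually_gt_nhds
    have : 0 < 1 / (2 * μ) := by positivity
    linarith
  have hlower : ∀ᶠ q in nhdsWithin (1 : ℝ) (Set.Ioo (0 : ℝ) 1), μ ≤ θ q / (1 - q) :=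
    hmem.mono fun q hq => by
      obtain ⟨ht0, hs⟩ := hθ q hq
      exact (heine_key μ q (θ q) hq.1 hq.2 ht0 hs).1
  have hupper : ∀ᶠ q in nhdsWithin (1 : ℝ) (Set.Ioo (0 : ℝ) 1),
      θ q / (1 - q) ≤ μ + 2 * μ ^ 2 * (1 - q) :=
    (hmem.and hclose).mono fun q ⟨hq, hc⟩ => by
      obtain ⟨ht0, hs⟩ := hθ q hq
      obtain ⟨h1, h2⟩ := heine_key μ q (θ q) hq.1 hq.2 ht0 hs
      have h1q : 0 < 1 - q := by linarith [hq.2]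
      have hθeq : θ q = θ q / (1 - q) * (1 - q) := by field_simp
      set x := θ q / (1 - q) with hx
      -- from hc : 1 - q < 1/(2μ), so μ(1-q) < 1/2
      have hmq : μ * (1 - q) < 1 / 2 := by
        have h2μ : 1 - q < 1 / (2 * μ) := by linarith
        rw [lt_div_iff₀ (by positivity)] at h2μ
        nlinarith
      -- h2 : x ≤ μ * (1 + x*(1-q))
      rw [hθeq] at h2
      have hx2 : x ≤ 2 * μ := by nlinarith
      nlinarith
  have htend : Tendsto (fun q : ℝ => μ + 2 * μ ^ 2 * (1 - q))
      (nhdsWithin 1 (Set.Ioo (0 : ℝ) 1)) (nhds μ) := by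
    have h0 : Tendsto (fun q : ℝ => μ + 2 * μ ^ 2 * (1 - q)) (nhds 1)
        (nhds (μ + 2 * μ ^ 2 * (1 - 1))) := Continuous.tendsto (by continuity) 1
    simpa using h0.mono_left nhdsWithin_le_nhds
  exact tendsto_of_tendsto_of_tendsto_of_le_of_le' tendsto_const_nhds htend hlower hupper
end

section
/- Let 0 < q < 1, n ∈ ℕ, and let f ≥ 0 be a real number. Then ∑_{i=0}^{n} q^{i−f} / (1 + q^{i−f})² ≤ 2/(1 − q). In particular, if X_n ∼ KB(n, q^{−f(n)}, q) with f(n) ≥ 0, the variances σ_n² = ∑_{i=0}^{n−1} q^{i−f(n)}/(1+q^{i−f(n)})² satisfy σ_n² ≤ 2/(1−q). -/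
open Finset

lemma kemp_geom_aux (q : ℝ) (hq0 : 0 < q) (hq1 : q < 1) (N : ℕ) :
    ∑ j ∈ range N, q ^ j ≤ (1 - q)⁻¹ := by
  have h := Summable.sum_le_tsum (range N) (fun i _ => pow_nonneg hq0.le i)
    (summable_geometric_of_lt_one hq0.le hq1)
  rwa [tsum_geometric_of_lt_one hq0.le hq1] at h

/-- For `0 < q < 1`, `n : ℕ` and a real `f ≥ 0`,
`∑_{i=0}^{n} q^(i-f) / (1 + q^(i-f))² ≤ 2/(1-q)`. In particular the variance of
`KB(n, q^(-f), q)` is bounded by `2/(1-q)`. -/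
theorem kemp_variance_bound (q : ℝ) (hq0 : 0 < q) (hq1 : q < 1) (n : ℕ) (f : ℝ) (hf : 0 ≤ f) :
    ∑ i ∈ range (n + 1), q ^ ((i : ℝ) - f) / (1 + q ^ ((i : ℝ) - f)) ^ 2 ≤ 2 / (1 - q) := by
  set m := Nat.floor f with hm
  have hmf : (m : ℝ) ≤ f := Nat.floor_le hf
  have hfm : f < m + 1 := Nat.lt_floor_add_one f
  have hq1' : (0:ℝ) < 1 - q := by linarith
  have key : ∀ i ∈ range (n + 1),
      q ^ ((i : ℝ) - f) / (1 + q ^ ((i : ℝ) - f)) ^ 2 ≤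
        (if i ≤ m then q ^ (m - i) else q ^ (i - (m + 1))) := by
    intro i _
    set x := q ^ ((i : ℝ) - f) with hx
    have hxpos : 0 < x := Real.rpow_pos_of_pos hq0 _
    split_ifs with h
    · calc x / (1 + x) ^ 2 ≤ 1 / x := by
            rw [div_le_div_iff₀ (by positivity) hxpos]; nlinarith
        _ = q ^ (f - (i : ℝ)) := by
            rw [hx, one_div, ← Real.rpow_neg hq0.le, neg_sub]
        _ ≤ q ^ (((m - i : ℕ) : ℝ)) := by
            apply Real.rpow_le_rpow_of_exponent_ge hq0 hq1.le
            rw [Nat.cast_sub h]; linarith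
        _ = q ^ (m - i) := Real.rpow_natCast q _
    · have hmi : m + 1 ≤ i := by omega
      calc x / (1 + x) ^ 2 ≤ x := by
            rw [div_le_iff₀ (by positivity)]; nlinarith [mul_pos hxpos hxpos, mul_pos (mul_pos hxpos hxpos) hxpos]
        _ ≤ q ^ (((i - (m + 1) : ℕ) : ℝ)) := by
            rw [hx]
            apply Real.rpow_le_rpow_of_exponent_ge hq0 hq1.le
            rw [Nat.cast_sub hmi]; push_cast; linarith
        _ = q ^ (i - (m + 1)) := Real.rpow_natCast q _
  refine (Finset.sum_le_sum key).trans ?_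
  rw [Finset.sum_ite]
  have hA : ∑ i ∈ (range (n + 1)).filter (fun i => i ≤ m), q ^ (m - i) ≤ (1 - q)⁻¹ := by
    have hsub : (range (n + 1)).filter (fun i => i ≤ m) ⊆ range (m + 1) := by
      intro i hi
      simp only [mem_filter, mem_range] at hi ⊢
      omega
    calc ∑ i ∈ (range (n + 1)).filter (fun i => i ≤ m), q ^ (m - i)
        ≤ ∑ i ∈ range (m + 1), q ^ (m - i) :=
          Finset.sum_le_sum_of_subset_of_nonneg hsub
            (fun i _ _ => pow_nonneg hq0.le _)
      _ = ∑ j ∈ range (m + 1), q ^ j := by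
          have := Finset.sum_range_reflect (fun j => q ^ j) (m + 1)
          simpa using this
      _ ≤ (1 - q)⁻¹ := kemp_geom_aux q hq0 hq1 _
  have hB : ∑ i ∈ (range (n + 1)).filter (fun i => ¬ i ≤ m), q ^ (i - (m + 1)) ≤ (1 - q)⁻¹ := by
    have heq : (range (n + 1)).filter (fun i => ¬ i ≤ m) = Ico (m + 1) (n + 1) := by
      ext i; simp only [mem_filter, mem_range, mem_Ico]; omega
    rw [heq, Finset.sum_Ico_eq_sum_range]
    calc ∑ j ∈ range (n + 1 - (m + 1)), q ^ (m + 1 + j - (m + 1))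
        = ∑ j ∈ range (n + 1 - (m + 1)), q ^ j := by
          apply Finset.sum_congr rfl; intro j _; congr 1; omega
      _ ≤ (1 - q)⁻¹ := kemp_geom_aux q hq0 hq1 _
  have : (2 : ℝ) / (1 - q) = (1 - q)⁻¹ + (1 - q)⁻¹ := by
    field_simp; ring
  rw [this]
  exact add_le_add hA hB
end

section
/- Let 0 < q < 1 and let f : ℕ → ℝ satisfy f(n) → ∞ and n − f(n) → ∞ as n → ∞. Define μ_n = ∑_{i=0}^{n−1} 1/(1 + q^{f(n)−i}) and, for β ∈ [0,1), c(β, q) = 1 − 1/(1 + q^{−β}) − β − ∑_{ℓ≥0} 1/(1 + q^{−ℓ−β−1}) + ∑_{ℓ≥0} 1/(1 + q^{−ℓ+β−1}). Then μ_n − f(n) − c({f(n)}, q) → 0 as n → ∞, where {x} denotes the fractional part of x. -/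
open Filter Finset

/-- The constant `c(β, q)` from the paper. -/
noncomputable def cConst (q β : ℝ) : ℝ :=
  1 - 1 / (1 + q ^ (-β)) - β
    - ∑' ℓ : ℕ, 1 / (1 + q ^ (-(ℓ : ℝ) - β - 1))
    + ∑' ℓ : ℕ, 1 / (1 + q ^ (-(ℓ : ℝ) + β - 1))

/-! Write `f n = m + β` with `m = ⌊f n⌋` and `β = {f n}` and split the sum at `i = m`.
Reflecting the first `m + 1` terms with `1/(1+q^x) = 1 - 1/(1+q^(-x))` leaves `m + 1` minus a
partial sum of `∑ 1/(1+q^(-(j+β)))`, plus a partial sum of `∑ 1/(1+q^(-(j+1-β)))`; these are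
the two series of `c(β, q)`. Both are dominated by `∑ q^j` uniformly in `β ∈ [0, 1)`, so the
error is at most `(q^(m+1) + q^(n-m-1)) / (1 - q)`, which tends to `0` since `m` and `n - m`
tend to infinity. -/

section

variable {q : ℝ}

theorem abs_sum_range_sub_tsum_le_of_abs_le_geometric (hq0 : 0 ≤ q) (hq1 : q < 1)
    {g : ℕ → ℝ} (hg : ∀ j, |g j| ≤ q ^ j) (N : ℕ) :
    |∑ j ∈ range N, g j - ∑' j, g j| ≤ q ^ N / (1 - q) := by
  have hs : Summable g := .of_norm_bounded (summable_geometric_of_lt_one hq0 hq1) hg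
  simpa [Real.dist_eq] using
    dist_le_of_le_geometric_of_tendsto (f := fun N ↦ ∑ j ∈ range N, g j) q 1 hq1
      (fun n ↦ by simpa [Real.dist_eq, sum_range_succ, abs_sub_comm] using hg n)
      hs.hasSum.tendsto_sum_nat N

theorem one_div_one_add_rpow_add_one_div_one_add_rpow_neg (hq0 : 0 < q) (x : ℝ) :
    1 / (1 + q ^ x) + 1 / (1 + q ^ (-x)) = 1 := by
  have := Real.rpow_pos_of_pos hq0 x
  rw [Real.rpow_neg hq0.le]
  field_simp
  ring

theorem abs_one_div_one_add_rpow_neg_le (hq0 : 0 < q) (hq1 : q < 1) {γ : ℝ} (hγ : 0 ≤ γ)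
    (j : ℕ) : |1 / (1 + q ^ (-((j : ℝ) + γ)))| ≤ q ^ j := by
  have hpos := Real.rpow_pos_of_pos hq0 (-((j : ℝ) + γ))
  rw [abs_of_pos (by positivity), ← Real.rpow_natCast]
  calc 1 / (1 + q ^ (-((j : ℝ) + γ))) ≤ 1 / q ^ (-((j : ℝ) + γ)) :=
        one_div_le_one_div_of_le hpos (by linarith)
    _ = q ^ ((j : ℝ) + γ) := by rw [Real.rpow_neg hq0.le, one_div, inv_inv]
    _ ≤ q ^ (j : ℝ) := Real.rpow_le_rpow_of_exponent_ge hq0 hq1.le (by linarith)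

theorem sum_range_one_div_one_add_rpow_eq (hq0 : 0 < q) (m K : ℕ) (β : ℝ) :
    ∑ i ∈ range (m + 1 + K), 1 / (1 + q ^ ((m : ℝ) + β - i)) =
      (m + 1) - ∑ j ∈ range (m + 1), 1 / (1 + q ^ (-((j : ℝ) + β)))
        + ∑ j ∈ range K, 1 / (1 + q ^ (-((j : ℝ) + (1 - β)))) := by
  have hhead : ∑ i ∈ range (m + 1), 1 / (1 + q ^ ((m : ℝ) + β - i)) =
      ∑ j ∈ range (m + 1), (1 - 1 / (1 + q ^ (-((j : ℝ) + β)))) := by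
    rw [← sum_range_reflect]
    refine sum_congr rfl fun j hj ↦ ?_
    rw [Nat.add_sub_cancel, Nat.cast_sub (Nat.lt_succ_iff.mp (mem_range.mp hj)),
      show (m : ℝ) + β - (m - j) = j + β by ring]
    exact eq_sub_of_add_eq (one_div_one_add_rpow_add_one_div_one_add_rpow_neg hq0 _)
  rw [sum_range_add, hhead, sum_sub_distrib]
  simp only [sum_const, card_range, nsmul_eq_mul, mul_one, Nat.cast_add, Nat.cast_one]
  congr 1
  refine sum_congr rfl fun j _ ↦ ?_
  congr 3
  ring

theorem cConst_eq (hq0 : 0 < q) (hq1 : q < 1) {β : ℝ} (hβ : 0 ≤ β) :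
    cConst q β = 1 - β - ∑' j : ℕ, 1 / (1 + q ^ (-((j : ℝ) + β)))
      + ∑' j : ℕ, 1 / (1 + q ^ (-((j : ℝ) + (1 - β)))) := by
  have hs : Summable fun j : ℕ ↦ 1 / (1 + q ^ (-((j : ℝ) + β))) :=
    .of_norm_bounded (summable_geometric_of_lt_one hq0.le hq1)
      (abs_one_div_one_add_rpow_neg_le hq0 hq1 hβ)
  rw [cConst, hs.tsum_eq_zero_add]
  push_cast
  -- `ring_nf` also normalises the exponents under `∑'`, so `-(ℓ + 1 + β)` meets `-ℓ - β - 1`.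
  ring_nf

theorem abs_sum_range_sub_sub_cConst_le (hq0 : 0 < q) (hq1 : q < 1) {β : ℝ} (hβ0 : 0 ≤ β)
    (hβ1 : β < 1) (m K : ℕ) :
    |∑ i ∈ range (m + 1 + K), 1 / (1 + q ^ ((m : ℝ) + β - i)) - (m + β) - cConst q β|
      ≤ (q ^ (m + 1) + q ^ K) / (1 - q) := by
  have tail := fun {γ : ℝ} (hγ : 0 ≤ γ) ↦
    abs_sum_range_sub_tsum_le_of_abs_le_geometric hq0.le hq1
      (abs_one_div_one_add_rpow_neg_le hq0 hq1 hγ)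
  rw [sum_range_one_div_one_add_rpow_eq hq0, cConst_eq hq0 hq1 hβ0, add_div]
  set S₁ := ∑ j ∈ range (m + 1), 1 / (1 + q ^ (-((j : ℝ) + β)))
  set T₁ := ∑' j : ℕ, 1 / (1 + q ^ (-((j : ℝ) + β)))
  set S₂ := ∑ j ∈ range K, 1 / (1 + q ^ (-((j : ℝ) + (1 - β))))
  set T₂ := ∑' j : ℕ, 1 / (1 + q ^ (-((j : ℝ) + (1 - β))))
  calc |(m + 1) - S₁ + S₂ - (m + β) - (1 - β - T₁ + T₂)| = |(S₂ - T₂) - (S₁ - T₁)| := by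
        ring_nf
    _ ≤ |S₁ - T₁| + |S₂ - T₂| := by rw [add_comm]; exact abs_sub _ _
    _ ≤ q ^ (m + 1) / (1 - q) + q ^ K / (1 - q) :=
      add_le_add (tail hβ0 (m + 1)) (tail (sub_nonneg.mpr hβ1.le) K)

end

/-- For `0 < q < 1` and `f : ℕ → ℝ` with `f(n) → ∞` and `n - f(n) → ∞`, the
means `μ_n = ∑_{i=0}^{n-1} 1/(1 + q^(f(n)-i))` satisfy
`μ_n = f(n) + c({f(n)}, q) + o(1)`. -/
theorem mean_asymptotics_subexponential (q : ℝ) (hq0 : 0 < q) (hq1 : q < 1)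
    (f : ℕ → ℝ)
    (hf : Tendsto f atTop atTop)
    (hnf : Tendsto (fun n : ℕ => (n : ℝ) - f n) atTop atTop) :
    Tendsto
      (fun n : ℕ =>
        (∑ i ∈ range n, 1 / (1 + q ^ (f n - (i : ℝ)))) - f n - cConst q (Int.fract (f n)))
      atTop (nhds 0) := by
  set m : ℕ → ℕ := fun n ↦ ⌊f n⌋₊
  set K : ℕ → ℕ := fun n ↦ n - (m n + 1)
  have hgood : ∀ᶠ n in atTop, 0 ≤ f n ∧ m n + 1 ≤ n := by
    filter_upwards [hf.eventually_ge_atTop 0, hnf.eventually_ge_atTop 1] with n hfn hnfn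
    have : (m n : ℝ) + 1 ≤ n := by linarith [Nat.floor_le hfn]
    exact ⟨hfn, by exact_mod_cast this⟩
  have hm : Tendsto m atTop atTop := tendsto_nat_floor_atTop.comp hf
  have hK : Tendsto K atTop atTop := by
    refine tendsto_natCast_atTop_iff.mp <| tendsto_atTop_mono' _ ?_
      (tendsto_atTop_add_const_right _ (-1) hnf)
    filter_upwards [hgood] with n ⟨hfn, hmn⟩
    rw [Nat.cast_sub hmn]
    push_cast
    linarith [Nat.floor_le hfn]
  have hgeom := tendsto_pow_atTop_nhds_zero_of_lt_one hq0.le hq1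
  have hbound : Tendsto (fun n ↦ (q ^ (m n + 1) + q ^ K n) / (1 - q)) atTop (nhds 0) := by
    simpa using ((hgeom.comp ((tendsto_add_atTop_nat 1).comp hm)).add (hgeom.comp hK)).div_const _
  refine squeeze_zero_norm' ?_ hbound
  filter_upwards [hgood] with n ⟨hfn, hmn⟩
  have hn : n = m n + 1 + K n := by simp only [K]; omega
  have hfloor : f n = m n + Int.fract (f n) := by
    rw [natCast_floor_eq_intCast_floor hfn, Int.floor_add_fract]
  have key := abs_sum_range_sub_sub_cConst_le hq0 hq1 (Int.fract_nonneg (f n))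
    (Int.fract_lt_one (f n)) (m n) (K n)
  rwa [← hn, ← hfloor] at key
end

section
/- Let 0 < q < 1. The Mellin transform of the function h(t) = ∑_{i=0}^{∞} 1/(1 + t q^{−i}), t > 0, exists for complex s with 0 < Re(s) < 1 and equals ∫_0^∞ t^{s−1} h(t) dt = (1/(1 − q^s)) · π / sin(π s). -/
/-!
The substitution `t = x / (1 - x)` turns the Mellin transform of `1 / (1 + t)` into the Beta
integral `B(s, 1 - s) = Γ(s) Γ(1 - s) = π / sin (π s)`. The `i`-th term of `h` is this function
rescaled by `q⁻ⁱ`, so its transform acquires the factor `(q ^ s) ^ i`. Since `Re s > 0`, the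
integrals of the absolute values also form a convergent geometric series, which justifies
integrating termwise, and summing the geometric series gives the factor `1 / (1 - q ^ s)`.
-/

open MeasureTheory Set Complex Filter

section

variable {α E : Type*} [MeasurableSpace α] {μ : Measure α} [NormedAddCommGroup E]

theorem MeasureTheory.Integrable.of_hasSum_of_summable_integral_norm {F : ℕ → α → E}
    {f : α → E} (hF_int : ∀ i, Integrable (F i) μ)
    (hF_sum : Summable fun i ↦ ∫ a, ‖F i a‖ ∂μ) (hf : ∀ᵐ a ∂μ, HasSum (F · a) (f a)) :
    Integrable f μ := by
  refine ⟨aestronglyMeasurable_of_tendsto_ae atTop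
    (fun n ↦ Finset.aestronglyMeasurable_fun_sum _ fun i _ ↦ (hF_int i).1)
    (hf.mono fun a ha ↦ ha.tendsto_sum_nat), ?_⟩
  have hbound : ∀ᵐ a ∂μ, ‖f a‖ₑ ≤ ∑' i, ‖F i a‖ₑ :=
    hf.mono fun a ha ↦ ha.tsum_eq ▸ enorm_tsum_le_tsum_enorm
  calc ∫⁻ a, ‖f a‖ₑ ∂μ ≤ ∫⁻ a, ∑' i, ‖F i a‖ₑ ∂μ := lintegral_mono_ae hbound
    _ = ∑' i, ENNReal.ofReal (∫ a, ‖F i a‖ ∂μ) := by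
      rw [lintegral_tsum fun i ↦ (hF_int i).1.enorm]
      simp_rw [ofReal_integral_norm_eq_lintegral_enorm (hF_int _)]
    _ = ENNReal.ofReal (∑' i, ∫ a, ‖F i a‖ ∂μ) :=
      (ENNReal.ofReal_tsum_of_nonneg (fun i ↦ integral_nonneg fun _ ↦ norm_nonneg _) hF_sum).symm
    _ < ⊤ := ENNReal.ofReal_lt_top

end

section

variable {E : Type*} [NormedAddCommGroup E] [NormedSpace ℂ E]

theorem mellinConvergent_and_hasSum_mellin_of_hasSum {f : ℕ → ℝ → E} {F : ℝ → E} {s : ℂ}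
    (hf : ∀ i, MellinConvergent (f i) s)
    (hf_sum : Summable fun i ↦ ∫ t : ℝ in Ioi 0, ‖(t : ℂ) ^ (s - 1) • f i t‖)
    (hF : ∀ t ∈ Ioi (0 : ℝ), HasSum (fun i ↦ f i t) (F t)) :
    MellinConvergent F s ∧ HasSum (fun i ↦ mellin (f i) s) (mellin F s) := by
  have hsum : ∀ᵐ t : ℝ ∂volume.restrict (Ioi 0),
      HasSum (fun i ↦ (t : ℂ) ^ (s - 1) • f i t) ((t : ℂ) ^ (s - 1) • F t) :=
    (ae_restrict_mem measurableSet_Ioi).mono fun t ht ↦ (hF t ht).const_smul _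
  refine ⟨Integrable.of_hasSum_of_summable_integral_norm hf hf_sum hsum, ?_⟩
  rw [mellin, integral_congr_ae (hsum.mono fun t ht ↦ ht.tsum_eq.symm)]
  exact hasSum_integral_of_summable_integral_norm hf hf_sum

theorem integral_norm_cpow_smul_comp_mul_right (f : ℝ → E) (s : ℂ) {a : ℝ} (ha : 0 < a) :
    ∫ t : ℝ in Ioi 0, ‖(t : ℂ) ^ (s - 1) • f (t * a)‖ =
      a ^ (-s.re) * ∫ t : ℝ in Ioi 0, ‖(t : ℂ) ^ (s - 1) • f t‖ := by
  have hscale : ∀ t ∈ Ioi (0 : ℝ), ‖(t : ℂ) ^ (s - 1) • f (t * a)‖ =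
      a ^ (1 - s.re) * ‖((t * a : ℝ) : ℂ) ^ (s - 1) • f (t * a)‖ := fun t ht ↦ by
    rw [norm_smul, norm_smul, norm_cpow_eq_rpow_re_of_pos ht,
      norm_cpow_eq_rpow_re_of_pos (mul_pos ht ha), Real.mul_rpow (le_of_lt ht) ha.le, sub_re,
      one_re, ← mul_assoc, ← mul_assoc, mul_comm (a ^ _), mul_assoc (t ^ _),
      ← Real.rpow_add ha, sub_add_sub_cancel', sub_self, Real.rpow_zero, mul_one]
  rw [setIntegral_congr_fun measurableSet_Ioi hscale, integral_const_mul,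
    integral_comp_mul_right_Ioi (fun u ↦ ‖(u : ℂ) ^ (s - 1) • f u‖) 0 ha, zero_mul, smul_eq_mul,
    ← mul_assoc, ← Real.rpow_neg_one, ← Real.rpow_add ha]
  ring_nf

theorem hasMellin_of_hasSum_comp_mul_zpow_neg {f F : ℝ → E} {q : ℝ} {s : ℂ} (hq0 : 0 < q)
    (hq1 : q < 1) (hs : 0 < s.re) (hf : MellinConvergent f s)
    (hF : ∀ t ∈ Ioi (0 : ℝ), HasSum (fun i : ℕ ↦ f (t * q ^ (-(i : ℤ)))) (F t)) :
    HasMellin F s ((1 - (q : ℂ) ^ s)⁻¹ • mellin f s) := by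
  have hpos (i : ℕ) : 0 < q ^ (-(i : ℤ)) := zpow_pos hq0 _
  have hconv (i : ℕ) : MellinConvergent (fun t ↦ f (t * q ^ (-(i : ℤ)))) s := by
    simpa only [mul_comm] using (MellinConvergent.comp_mul_left (hpos i)).mpr hf
  have hval (i : ℕ) :
      mellin (fun t ↦ f (t * q ^ (-(i : ℤ)))) s = ((q : ℂ) ^ s) ^ i • mellin f s := by
    rw [mellin_comp_mul_right _ _ (hpos i), ← Real.rpow_intCast, ← cpow_mul_ofReal_nonneg hq0.le,
      ← cpow_nat_mul]
    push_cast
    ring_nf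
  have hnorm (i : ℕ) : ∫ t : ℝ in Ioi 0, ‖(t : ℂ) ^ (s - 1) • f (t * q ^ (-(i : ℤ)))‖ =
      (q ^ s.re) ^ i * ∫ t : ℝ in Ioi 0, ‖(t : ℂ) ^ (s - 1) • f t‖ := by
    rw [integral_norm_cpow_smul_comp_mul_right f s (hpos i), ← Real.rpow_intCast,
      ← Real.rpow_mul hq0.le, ← Real.rpow_natCast, ← Real.rpow_mul hq0.le]
    push_cast
    ring_nf
  have hqs : ‖(q : ℂ) ^ s‖ < 1 := by
    rw [norm_cpow_eq_rpow_re_of_pos hq0]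
    exact Real.rpow_lt_one hq0.le hq1 hs
  obtain ⟨hFconv, hFsum⟩ := mellinConvergent_and_hasSum_mellin_of_hasSum hconv
    (by simpa only [hnorm, ← norm_cpow_eq_rpow_re_of_pos hq0] using
      (summable_geometric_of_lt_one (norm_nonneg _) hqs).mul_right _) hF
  refine ⟨hFconv, hFsum.unique ?_⟩
  simpa only [hval] using (hasSum_geometric_of_norm_lt_one hqs).smul_const (mellin f s)

end

lemma image_div_one_sub_Ioo : (fun x : ℝ ↦ x / (1 - x)) '' Ioo 0 1 = Ioi 0 := by
  ext t
  constructor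
  · rintro ⟨x, ⟨hx0, hx1⟩, rfl⟩
    exact div_pos hx0 (sub_pos.mpr hx1)
  · intro (ht : 0 < t)
    refine ⟨t / (1 + t), ⟨by positivity, (div_lt_one (by positivity)).2 (by linarith)⟩, ?_⟩
    field_simp
    ring

lemma injOn_div_one_sub_Ioo : InjOn (fun x : ℝ ↦ x / (1 - x)) (Ioo 0 1) := by
  rintro x ⟨-, hx1⟩ y ⟨-, hy1⟩ hxy
  rw [div_eq_div_iff (sub_pos.mpr hx1).ne' (sub_pos.mpr hy1).ne'] at hxy
  linarith

lemma hasDerivAt_div_one_sub {x : ℝ} (hx : x ≠ 1) :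
    HasDerivAt (fun x : ℝ ↦ x / (1 - x)) ((1 - x) ^ 2)⁻¹ x :=
  ((hasDerivAt_id' x).fun_div ((hasDerivAt_id' x).const_sub 1)
    (sub_ne_zero.mpr hx.symm)).congr_deriv (by ring)

lemma abs_deriv_smul_cpow_smul_one_div_one_add {x : ℝ} (hx : x ∈ Ioo 0 1) (s : ℂ) :
    |((1 - x) ^ 2)⁻¹| • (((x / (1 - x) : ℝ) : ℂ) ^ (s - 1) • ((1 / (1 + x / (1 - x)) : ℝ) : ℂ)) =
      (x : ℂ) ^ (s - 1) * (1 - (x : ℂ)) ^ ((1 - s) - 1) := by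
  obtain ⟨hx0, hx1⟩ := hx
  have hu : 0 < 1 - x := sub_pos.mpr hx1
  have hu' : (1 - x : ℂ) ≠ 0 := by exact_mod_cast hu.ne'
  have harg : ((1 - x : ℝ) : ℂ).arg ≠ Real.pi := by
    rw [arg_ofReal_of_nonneg hu.le]; exact Real.pi_pos.ne
  have hinv : 1 / (1 + x / (1 - x)) = 1 - x := by field_simp; ring
  rw [hinv, div_eq_mul_inv, ofReal_mul, mul_cpow_ofReal_nonneg hx0.le (inv_nonneg.mpr hu.le),
    ofReal_inv, inv_cpow _ _ harg, abs_of_pos (by positivity), real_smul, smul_eq_mul,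
    show (1 - s) - 1 = -(s - 1) + -1 by ring, cpow_add _ _ hu', cpow_neg, cpow_neg_one]
  push_cast
  field_simp

theorem hasMellin_one_div_one_add {s : ℂ} (hs0 : 0 < s.re) (hs1 : s.re < 1) :
    HasMellin (fun t : ℝ ↦ ((1 / (1 + t) : ℝ) : ℂ)) s (Real.pi / sin (Real.pi * s)) := by
  have hs1' : 0 < (1 - s).re := by simpa using hs1
  have hderiv (x : ℝ) (hx : x ∈ Ioo (0 : ℝ) 1) :
      HasDerivWithinAt (fun x : ℝ ↦ x / (1 - x)) ((1 - x) ^ 2)⁻¹ (Ioo 0 1) x :=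
    (hasDerivAt_div_one_sub hx.2.ne).hasDerivWithinAt
  have hbeta : IntegrableOn (fun x : ℝ ↦ (x : ℂ) ^ (s - 1) * (1 - (x : ℂ)) ^ ((1 - s) - 1))
      (Ioo 0 1) :=
    ((intervalIntegrable_iff_integrableOn_Ioc_of_le zero_le_one).mp
      (betaIntegral_convergent hs0 hs1')).mono_set Ioo_subset_Ioc_self
  constructor
  · rw [MellinConvergent, ← image_div_one_sub_Ioo,
      integrableOn_image_iff_integrableOn_abs_deriv_smul measurableSet_Ioo hderiv
        injOn_div_one_sub_Ioo]
    exact hbeta.congr_fun (fun x hx ↦ (abs_deriv_smul_cpow_smul_one_div_one_add hx s).symm)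
      measurableSet_Ioo
  · rw [mellin, ← image_div_one_sub_Ioo,
      integral_image_eq_integral_abs_deriv_smul measurableSet_Ioo hderiv injOn_div_one_sub_Ioo,
      setIntegral_congr_fun measurableSet_Ioo
        (fun x hx ↦ abs_deriv_smul_cpow_smul_one_div_one_add hx s),
      ← integral_Ioc_eq_integral_Ioo, ← intervalIntegral.integral_of_le zero_le_one,
      ← betaIntegral, ← Gamma_mul_Gamma_one_sub, Gamma_mul_Gamma_eq_betaIntegral hs0 hs1',
      add_sub_cancel, Gamma_one, one_mul]

lemma summable_one_div_one_add_mul_zpow_neg {q t : ℝ} (hq0 : 0 < q) (hq1 : q < 1) (ht : 0 < t) :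
    Summable fun i : ℕ ↦ 1 / (1 + t * q ^ (-(i : ℤ))) := by
  refine Summable.of_nonneg_of_le (fun i ↦ by positivity) (fun i ↦ ?_)
    ((summable_geometric_of_lt_one hq0.le hq1).div_const t)
  calc 1 / (1 + t * q ^ (-(i : ℤ))) ≤ 1 / (t * q ^ (-(i : ℤ))) :=
        one_div_le_one_div_of_le (by positivity) (by linarith)
    _ = q ^ i / t := by rw [zpow_neg, zpow_natCast]; field_simp

/-- For `0 < q < 1`, the Mellin transform of
`h(t) = ∑_{i=0}^{∞} 1/(1 + t q^{-i})` exists in the strip `0 < Re s < 1` and equals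
`(1/(1 - q^s)) · π / sin(π s)`. -/
theorem mellin_of_h (q : ℝ) (hq0 : 0 < q) (hq1 : q < 1)
    (h : ℝ → ℂ) (hh : ∀ t : ℝ, h t = ((∑' i : ℕ, 1 / (1 + t * q ^ (-(i : ℤ))) : ℝ) : ℂ))
    (s : ℂ) (hs0 : 0 < s.re) (hs1 : s.re < 1) :
    MellinConvergent h s ∧
      mellin h s = (1 / (1 - (q : ℂ) ^ s)) * ((Real.pi : ℂ) / Complex.sin (Real.pi * s)) := by
  have hsum (t : ℝ) (ht : t ∈ Ioi 0) :
      HasSum (fun i : ℕ ↦ ((1 / (1 + t * q ^ (-(i : ℤ))) : ℝ) : ℂ)) (h t) := by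
    rw [hh, hasSum_ofReal]
    exact (summable_one_div_one_add_mul_zpow_neg hq0 hq1 ht).hasSum
  obtain ⟨hconv, hbase⟩ := hasMellin_one_div_one_add hs0 hs1
  obtain ⟨hconv_h, hval⟩ := hasMellin_of_hasSum_comp_mul_zpow_neg hq0 hq1 hs0 hconv hsum
  exact ⟨hconv_h, by rw [hval, hbase, one_div, smul_eq_mul]⟩
end

section
/- For fixed β ∈ [0,1), the constant c(β, q) = 1 − 1/(1 + q^{−β}) − β − ∑_{ℓ≥0} 1/(1 + q^{−ℓ−β−1}) + ∑_{ℓ≥0} 1/(1 + q^{−ℓ+β−1}) converges to 1/2 as q → 1⁻. -/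
open Filter

section Aux

open Real Set

/-- Auxiliary function `ff q x = 1 / (1 + q^(-x))`. -/
noncomputable def ff (q x : ℝ) : ℝ := 1 / (1 + q ^ (-x))


variable {q : ℝ}

lemma den_pos (hq : 0 < q) (x : ℝ) : 0 < 1 + q ^ (-x) := by
  have := Real.rpow_pos_of_pos hq (-x); linarith

lemma ff_nonneg (hq : 0 < q) (x : ℝ) : 0 ≤ ff q x :=
  le_of_lt (div_pos one_pos (den_pos hq x))

lemma ff_le_rpow (hq : 0 < q) (x : ℝ) : ff q x ≤ q ^ x := by
  have h1 : (0:ℝ) < q ^ (-x) := Real.rpow_pos_of_pos hq _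
  have h2 : 1 / (1 + q ^ (-x)) ≤ 1 / (q ^ (-x)) := by
    apply one_div_le_one_div_of_le h1; linarith
  calc ff q x ≤ 1 / q ^ (-x) := h2
    _ = q ^ x := by rw [one_div, ← Real.rpow_neg hq.le, neg_neg]

lemma ff_anti (hq : 0 < q) (hq1 : q < 1) {x y : ℝ} (h : x ≤ y) : ff q y ≤ ff q x := by
  have h1 : q ^ (-x) ≤ q ^ (-y) :=
    Real.rpow_le_rpow_of_exponent_ge hq hq1.le (neg_le_neg h)
  exact one_div_le_one_div_of_le (den_pos hq x) (by linarith)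

lemma ff_eq_exp (hq : 0 < q) (x : ℝ) : ff q x = (1 + Real.exp ((-Real.log q) * x))⁻¹ := by
  rw [ff, one_div, Real.rpow_def_of_pos hq]
  ring_nf

lemma hasDerivAt_ff (hq : 0 < q) (x : ℝ) :
    HasDerivAt (ff q)
      (-(Real.exp ((-Real.log q) * x) * (-Real.log q)) / (1 + Real.exp ((-Real.log q) * x)) ^ 2)
      x := by
  set t := -Real.log q with ht
  have h1 : HasDerivAt (fun x : ℝ => t * x) t x := by
    simpa using (hasDerivAt_id x).const_mul t
  have h2 : HasDerivAt (fun x : ℝ => Real.exp (t * x)) (Real.exp (t * x) * t) x :=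
    (Real.hasDerivAt_exp (t * x)).comp x h1
  have h3 : HasDerivAt (fun x : ℝ => 1 + Real.exp (t * x)) (Real.exp (t * x) * t) x :=
    h2.const_add 1
  have hne : (1 + Real.exp (t * x)) ≠ 0 := by positivity
  have h4 := h3.inv hne
  have : ff q = fun x : ℝ => (1 + Real.exp (t * x))⁻¹ := funext fun y => ff_eq_exp hq y
  rw [this]
  exact h4

lemma convexOn_ff (hq : 0 < q) (hq1 : q < 1) : ConvexOn ℝ (Set.Ici (0:ℝ)) (ff q) := by
  set t := -Real.log q with ht
  have htpos : 0 < t := by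
    rw [ht]; simpa using Real.log_neg hq hq1
  apply MonotoneOn.convexOn_of_deriv (convex_Ici 0)
  · exact fun x _ => (hasDerivAt_ff hq x).continuousAt.continuousWithinAt
  · exact fun x _ => ((hasDerivAt_ff hq x).differentiableAt).differentiableWithinAt
  · intro a ha b hb hab
    rw [(hasDerivAt_ff hq a).deriv, (hasDerivAt_ff hq b).deriv]
    rw [interior_Ici] at ha hb
    have ha' : (0:ℝ) < a := ha
    have hb' : (0:ℝ) < b := hb
    set ea := Real.exp (t * a) with hea
    set eb := Real.exp (t * b) with heb
    have h1a : 1 ≤ ea := by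
      rw [hea]; nlinarith [Real.one_le_exp (by positivity : (0:ℝ) ≤ t * a)]
    have h1b : ea ≤ eb := by
      apply Real.exp_le_exp.2; nlinarith
    have hda : (0:ℝ) < (1 + ea) ^ 2 := by positivity
    have hdb : (0:ℝ) < (1 + eb) ^ 2 := by positivity
    rw [div_le_div_iff₀ hda hdb]
    nlinarith [mul_nonneg (mul_nonneg htpos.le (sub_nonneg.2 h1b)) (sub_nonneg.2 (by nlinarith : (1:ℝ) ≤ ea * eb))]

lemma key_lower (hq : 0 < q) (hq1 : q < 1) {β x : ℝ} (hβ : 0 ≤ β) (hx : 0 ≤ x) :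
    2 * β * (ff q (x + 2*β) - ff q (x + 2*β + 1)) ≤ ff q x - ff q (x + 2*β) := by
  rcases eq_or_lt_of_le hβ with h | h
  · simp [← h]
  · have hs := (convexOn_ff hq hq1).slope_mono_adjacent (x := x) (y := x + 2*β) (z := x + 2*β + 1)
      (by exact hx) (by simp only [Set.mem_Ici]; linarith) (by linarith) (by linarith)
    have h2 : x + 2*β - x = 2*β := by ring
    have h3 : x + 2*β + 1 - (x + 2*β) = 1 := by ring
    rw [h2, h3, div_one, div_le_iff₀ (by linarith : (0:ℝ) < 2*β)] at hs
    nlinarith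

lemma key_upper (hq : 0 < q) (hq1 : q < 1) {β x : ℝ} (hβ : 0 ≤ β) (hx : 0 ≤ x) :
    ff q (x + 1) - ff q (x + 1 + 2*β) ≤ 2 * β * (ff q x - ff q (x + 1)) := by
  rcases eq_or_lt_of_le hβ with h | h
  · simp [← h]
  · have hs := (convexOn_ff hq hq1).slope_mono_adjacent (x := x) (y := x + 1) (z := x + 1 + 2*β)
      (by exact hx) (by simp only [Set.mem_Ici]; linarith) (by linarith) (by linarith)
    have h2 : x + 1 - x = 1 := by ring
    have h3 : x + 1 + 2*β - (x + 1) = 2*β := by ring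
    rw [h2, h3, div_one, le_div_iff₀ (by linarith : (0:ℝ) < 2*β)] at hs
    nlinarith

lemma summable_ff (hq : 0 < q) (hq1 : q < 1) (c : ℝ) :
    Summable (fun ℓ : ℕ => ff q ((ℓ : ℝ) + c)) := by
  refine Summable.of_nonneg_of_le (f := fun ℓ : ℕ => q ^ c * q ^ ℓ)
    (fun ℓ => ff_nonneg hq _) (fun ℓ => ?_)
    ((summable_geometric_of_lt_one hq.le hq1).mul_left _)
  calc ff q ((ℓ:ℝ) + c) ≤ q ^ ((ℓ:ℝ) + c) := ff_le_rpow hq _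
    _ = q ^ c * q ^ ℓ := by
        rw [Real.rpow_add hq, Real.rpow_natCast]; ring

lemma tendsto_ff_atTop (hq : 0 < q) (hq1 : q < 1) (c : ℝ) :
    Tendsto (fun n : ℕ => ff q ((n : ℝ) + c)) atTop (nhds 0) := by
  apply squeeze_zero (fun n => ff_nonneg hq _) (fun n => ?_)
    (g := fun n : ℕ => q ^ c * q ^ n)
  · simpa using (tendsto_pow_atTop_nhds_zero_of_lt_one hq.le hq1).const_mul (q ^ c)
  · calc ff q ((n:ℝ) + c) ≤ q ^ ((n:ℝ) + c) := ff_le_rpow hq _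
      _ = q ^ c * q ^ n := by rw [Real.rpow_add hq, Real.rpow_natCast]; ring

lemma hasSum_tele (hq : 0 < q) (hq1 : q < 1) (c : ℝ) :
    HasSum (fun ℓ : ℕ => ff q ((ℓ : ℝ) + c) - ff q ((ℓ : ℝ) + 1 + c)) (ff q c) := by
  have hnn : ∀ ℓ : ℕ, 0 ≤ ff q ((ℓ : ℝ) + c) - ff q ((ℓ : ℝ) + 1 + c) :=
    fun ℓ => sub_nonneg.2 (ff_anti hq hq1 (by linarith))
  rw [hasSum_iff_tendsto_nat_of_nonneg hnn]
  have hps : ∀ n : ℕ, ∑ i ∈ Finset.range n, (ff q ((i : ℝ) + c) - ff q ((i : ℝ) + 1 + c))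
      = ff q c - ff q ((n : ℝ) + c) := by
    intro n
    have h := Finset.sum_range_sub' (f := fun i : ℕ => ff q ((i : ℝ) + c)) n
    simp only [Nat.cast_zero, zero_add, Nat.cast_add, Nat.cast_one] at h
    rw [← h]
  simp only [hps]
  have := (tendsto_ff_atTop hq hq1 c)
  simpa using tendsto_const_nhds.sub this

lemma tendsto_ff_one (x : ℝ) :
    Tendsto (fun q : ℝ => ff q x) (nhdsWithin 1 (Set.Ioo (0:ℝ) 1)) (nhds (1/2)) := by
  have h1 : ContinuousAt (fun q : ℝ => q ^ (-x)) 1 :=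
    Real.continuousAt_rpow_const 1 (-x) (Or.inl one_ne_zero)
  have h2 : ContinuousAt (fun q : ℝ => ff q x) 1 := by
    apply ContinuousAt.div continuousAt_const (continuousAt_const.add h1)
    norm_num [Real.one_rpow]
  have h3 : ff 1 x = 1/2 := by simp [ff, Real.one_rpow]; norm_num
  have := h2.tendsto
  rw [h3] at this
  exact this.mono_left nhdsWithin_le_nhds

end Aux

open Real Set in
/-- For fixed `β ∈ [0,1)`, `c(β, q) → 1/2` as `q → 1⁻`. -/
theorem cConst_tendsto_half (β : ℝ) (hβ0 : 0 ≤ β) (hβ1 : β < 1) :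
    Tendsto (fun q => cConst q β) (nhdsWithin 1 (Set.Ioo (0 : ℝ) 1)) (nhds (1 / 2)) := by
  set D : ℝ → ℝ := fun q => ∑' ℓ : ℕ, (ff q ((ℓ:ℝ) + (1-β)) - ff q ((ℓ:ℝ) + (1+β))) with hD
  -- Step 1 : rewrite cConst
  have step1 : ∀ q ∈ Set.Ioo (0:ℝ) 1, cConst q β = 1 - ff q β - β + D q := by
    rintro q ⟨hq, hq1⟩
    have e1 : ∑' ℓ : ℕ, 1 / (1 + q ^ (-(ℓ : ℝ) - β - 1))
        = ∑' ℓ : ℕ, ff q ((ℓ:ℝ) + (1+β)) := by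
      refine tsum_congr fun ℓ => ?_
      have h : -((ℓ:ℝ) + (1+β)) = -(ℓ:ℝ) - β - 1 := by ring
      rw [ff, h]
    have e2 : ∑' ℓ : ℕ, 1 / (1 + q ^ (-(ℓ : ℝ) + β - 1))
        = ∑' ℓ : ℕ, ff q ((ℓ:ℝ) + (1-β)) := by
      refine tsum_congr fun ℓ => ?_
      have h : -((ℓ:ℝ) + (1-β)) = -(ℓ:ℝ) + β - 1 := by ring
      rw [ff, h]
    have e3 : D q = (∑' ℓ : ℕ, ff q ((ℓ:ℝ) + (1-β))) - ∑' ℓ : ℕ, ff q ((ℓ:ℝ) + (1+β)) :=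
      Summable.tsum_sub (summable_ff hq hq1 (1-β)) (summable_ff hq hq1 (1+β))
    rw [cConst, e1, e2, e3, ff]
    ring
  -- Step 2 : bounds on D
  have step2 : ∀ q ∈ Set.Ioo (0:ℝ) 1,
      2*β * ff q (1+β) ≤ D q ∧
      D q ≤ (ff q (1-β) - ff q (1+β)) + 2*β * ff q (1-β) := by
    rintro q ⟨hq, hq1⟩
    have hsum_diff : Summable (fun ℓ : ℕ => ff q ((ℓ:ℝ) + (1-β)) - ff q ((ℓ:ℝ) + (1+β))) :=
      (summable_ff hq hq1 (1-β)).sub (summable_ff hq hq1 (1+β))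
    constructor
    · have htele := (hasSum_tele hq hq1 (1+β)).mul_left (2*β)
      have hle : ∀ ℓ : ℕ, 2*β*(ff q ((ℓ:ℝ)+(1+β)) - ff q ((ℓ:ℝ)+1+(1+β)))
          ≤ ff q ((ℓ:ℝ)+(1-β)) - ff q ((ℓ:ℝ)+(1+β)) := by
        intro ℓ
        have h := key_lower hq hq1 hβ0 (x := (ℓ:ℝ)+(1-β))
          (by have := Nat.cast_nonneg (α := ℝ) ℓ; linarith)
        have e1 : (ℓ:ℝ)+(1-β)+2*β = (ℓ:ℝ)+(1+β) := by ring
        have e2 : (ℓ:ℝ)+(1-β)+2*β+1 = (ℓ:ℝ)+1+(1+β) := by ring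
        rw [e2, e1] at h
        exact h
      calc 2*β * ff q (1+β)
          = ∑' ℓ : ℕ, 2*β*(ff q ((ℓ:ℝ)+(1+β)) - ff q ((ℓ:ℝ)+1+(1+β))) := htele.tsum_eq.symm
        _ ≤ D q := Summable.tsum_le_tsum hle htele.summable hsum_diff
    · have htele := (hasSum_tele hq hq1 (1-β)).mul_left (2*β)
      have hfirst : ff q (((0:ℕ):ℝ) + (1-β)) - ff q (((0:ℕ):ℝ) + (1+β))
          = ff q (1-β) - ff q (1+β) := by norm_num
      have hsplit : D q = (ff q (((0:ℕ):ℝ) + (1-β)) - ff q (((0:ℕ):ℝ) + (1+β)))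
          + ∑' ℓ : ℕ, (ff q (((ℓ+1:ℕ):ℝ)+(1-β)) - ff q (((ℓ+1:ℕ):ℝ)+(1+β))) :=
        Summable.tsum_eq_zero_add hsum_diff
      rw [hsplit, hfirst]
      apply add_le_add le_rfl
      have hle : ∀ ℓ : ℕ, ff q ((((ℓ+1:ℕ)):ℝ)+(1-β)) - ff q (((ℓ+1:ℕ):ℝ)+(1+β))
          ≤ 2*β*(ff q ((ℓ:ℝ)+(1-β)) - ff q ((ℓ:ℝ)+1+(1-β))) := by
        intro ℓ
        have h := key_upper hq hq1 hβ0 (x := (ℓ:ℝ)+(1-β))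
          (by have := Nat.cast_nonneg (α := ℝ) ℓ; linarith)
        have e1 : (ℓ:ℝ)+(1-β)+1 = (ℓ:ℝ)+1+(1-β) := by ring
        have e2 : (ℓ:ℝ)+(1-β)+1+2*β = (ℓ:ℝ)+1+(1+β) := by ring
        rw [e2, e1] at h
        push_cast
        exact h
      calc (∑' ℓ : ℕ, (ff q (((ℓ+1:ℕ):ℝ)+(1-β)) - ff q (((ℓ+1:ℕ):ℝ)+(1+β))))
          ≤ ∑' ℓ : ℕ, 2*β*(ff q ((ℓ:ℝ)+(1-β)) - ff q ((ℓ:ℝ)+1+(1-β))) :=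
            Summable.tsum_le_tsum hle
              ((summable_nat_add_iff
                (f := fun ℓ : ℕ => ff q ((ℓ:ℝ)+(1-β)) - ff q ((ℓ:ℝ)+(1+β))) 1).2 hsum_diff)
              htele.summable
        _ = 2*β * ff q (1-β) := htele.tsum_eq
  -- Step 3 : limits
  have hL : Tendsto (fun q : ℝ => 2*β * ff q (1+β)) (nhdsWithin 1 (Set.Ioo (0:ℝ) 1)) (nhds β) := by
    have := (tendsto_ff_one (1+β)).const_mul (2*β)
    have h2 : 2*β * (1/2) = β := by ring
    rwa [h2] at this
  have hU : Tendsto (fun q : ℝ => (ff q (1-β) - ff q (1+β)) + 2*β * ff q (1-β))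
      (nhdsWithin 1 (Set.Ioo (0:ℝ) 1)) (nhds β) := by
    have := ((tendsto_ff_one (1-β)).sub (tendsto_ff_one (1+β))).add
      ((tendsto_ff_one (1-β)).const_mul (2*β))
    have h2 : (1/2 - 1/2 : ℝ) + 2*β * (1/2) = β := by ring
    rwa [h2] at this
  have hDlim : Tendsto D (nhdsWithin 1 (Set.Ioo (0:ℝ) 1)) (nhds β) := by
    apply tendsto_of_tendsto_of_tendsto_of_le_of_le' hL hU
    · filter_upwards [self_mem_nhdsWithin] with q hq using (step2 q hq).1
    · filter_upwards [self_mem_nhdsWithin] with q hq using (step2 q hq).2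
  have hA : Tendsto (fun q : ℝ => 1 - ff q β - β + D q)
      (nhdsWithin 1 (Set.Ioo (0:ℝ) 1)) (nhds (1/2)) := by
    have := ((tendsto_const_nhds (x := (1:ℝ))).sub (tendsto_ff_one β)).sub
      (tendsto_const_nhds (x := β)) |>.add hDlim
    have h2 : (1:ℝ) - 1/2 - β + β = 1/2 := by ring
    rwa [h2] at this
  apply hA.congr'
  filter_upwards [self_mem_nhdsWithin] with q hq using (step1 q hq).symm
end

section
/- For fixed β ∈ [0,1), the limit as q → 0⁺ of the series ∑_{k=1}^{∞} 2π sin(2kβπ) / ( (log q) · sinh(2kπ²/log q) ) equals 1/2 − β if β > 0, and equals 0 if β = 0. -/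
/-!
Put `t = -log q`, so that `t → ∞` as `q → 0⁺` and `log q · sinh (x / log q) = t · sinh (x / t)`.
For `u = 2π²` the coefficients `c_t(k) = 1 / (t · sinh ((k + 1) u / t))` are positive, decreasing
in `k` and bounded by their limit `1 / ((k + 1) u)`, while the partial sums of `sin ((k + 1) θ)`,
`θ = 2βπ`, are bounded by `1 / sin (θ / 2)`. Abel summation then bounds the tails of
`∑ sin ((k + 1) θ) c_t(k)` uniformly in `t`, so the limit can be taken termwise; this leaves
`u⁻¹ ∑ sin ((k + 1) θ) / (k + 1)`, which Abel's limit theorem evaluates as the imaginary part of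
`-log (1 - e^{iθ})`, namely `(π - θ) / 2`.
-/

open Filter Real Finset Topology

section Abel

variable {a c : ℕ → ℝ} {B : ℝ}

theorem abs_sum_range_mul_le_of_antitone (hc : Antitone c) (hc0 : ∀ n, 0 ≤ c n)
    (ha : ∀ n, |∑ i ∈ range n, a i| ≤ B) (n : ℕ) :
    |∑ i ∈ range n, a i * c i| ≤ B * c 0 := by
  have hparts := sum_range_by_parts c a n
  simp only [smul_eq_mul] at hparts
  have hdiff : ∀ i, |(c (i + 1) - c i) * ∑ j ∈ range (i + 1), a j| ≤ (c i - c (i + 1)) * B :=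
    fun i => by
      rw [abs_mul, abs_sub_comm, abs_of_nonneg (sub_nonneg.2 (hc i.le_succ))]
      exact mul_le_mul_of_nonneg_left (ha _) (sub_nonneg.2 (hc i.le_succ))
  calc |∑ i ∈ range n, a i * c i|
      = |c (n - 1) * ∑ i ∈ range n, a i
          - ∑ i ∈ range (n - 1), (c (i + 1) - c i) * ∑ j ∈ range (i + 1), a j| := by
        simp_rw [mul_comm (a _), hparts]
    _ ≤ c (n - 1) * B + ∑ i ∈ range (n - 1), (c i - c (i + 1)) * B := by
        refine (abs_sub _ _).trans (add_le_add ?_ ((abs_sum_le_sum_abs _ _).trans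
          (sum_le_sum fun i _ => hdiff i)))
        rw [abs_mul, abs_of_nonneg (hc0 _)]
        exact mul_le_mul_of_nonneg_left (ha n) (hc0 _)
    _ = B * c 0 := by
        rw [← sum_mul, sum_range_sub' c]
        ring

theorem abs_sub_sum_range_mul_le_of_antitone (hc : Antitone c) (hc0 : ∀ n, 0 ≤ c n)
    (ha : ∀ n, |∑ i ∈ range n, a i| ≤ B) {l : ℝ}
    (hl : Tendsto (fun n => ∑ i ∈ range n, a i * c i) atTop (𝓝 l)) (N : ℕ) :
    |l - ∑ i ∈ range N, a i * c i| ≤ 2 * B * c N := by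
  have htail : Tendsto (fun n => ∑ i ∈ range n, a (N + i) * c (N + i)) atTop
      (𝓝 (l - ∑ i ∈ range N, a i * c i)) := by
    have hNadd : Tendsto (N + ·) atTop atTop :=
      (tendsto_add_atTop_nat N).congr fun n => add_comm n N
    refine ((hl.comp hNadd).sub_const _).congr fun n => ?_
    simp [sum_range_add]
  have hshift : ∀ n, |∑ i ∈ range n, a (N + i)| ≤ 2 * B := fun n => by
    rw [← add_sub_cancel_left (∑ i ∈ range N, a i) (∑ i ∈ range n, a (N + i)), ← sum_range_add]
    linarith [abs_sub (∑ i ∈ range (N + n), a i) (∑ i ∈ range N, a i), ha (N + n), ha N]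
  refine le_of_tendsto htail.abs (Eventually.of_forall fun n => ?_)
  simpa using abs_sum_range_mul_le_of_antitone (hc.comp_monotone (monotone_id.const_add N))
    (fun i => hc0 _) hshift n

theorem tendsto_tsum_mul_of_antitone {α : Type*} {l : Filter α} {c : α → ℕ → ℝ} {d : ℕ → ℝ}
    {L : ℝ} (ha : ∀ n, |∑ i ∈ range n, a i| ≤ B)
    (hc : ∀ᶠ x in l, Antitone (c x) ∧ (∀ n, 0 ≤ c x n) ∧ (∀ n, c x n ≤ d n) ∧
      Summable fun n => a n * c x n)
    (hcd : ∀ n, Tendsto (c · n) l (𝓝 (d n))) (hd : Tendsto d atTop (𝓝 0))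
    (hL : Tendsto (fun n => ∑ i ∈ range n, a i * d i) atTop (𝓝 L)) :
    Tendsto (fun x => ∑' n, a n * c x n) l (𝓝 L) := by
  have hB : 0 ≤ B := (abs_nonneg _).trans (ha 0)
  refine TendstoUniformlyOnFilter.tendsto_of_eventually_tendsto (p := atTop)
    (F := fun N x => ∑ i ∈ range N, a i * c x i) ?_
    (Eventually.of_forall fun N => tendsto_finsetSum _ fun i _ => (hcd i).const_mul (a i)) hL
  rw [Metric.tendstoUniformlyOnFilter_iff]
  intro ε hε
  have hsmall : ∀ᶠ N in atTop, 2 * B * d N < ε := by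
    simpa using (hd.const_mul (2 * B)).eventually (gt_mem_nhds (by simpa using hε))
  filter_upwards [hsmall.prod_mk hc] with ⟨N, x⟩ ⟨hN, hanti, hnonneg, hle, hsum⟩
  rw [Real.dist_eq]
  calc |∑' n, a n * c x n - ∑ i ∈ range N, a i * c x i|
      ≤ 2 * B * c x N :=
        abs_sub_sum_range_mul_le_of_antitone hanti hnonneg ha hsum.hasSum.tendsto_sum_nat N
    _ ≤ 2 * B * d N := by gcongr; exact hle N
    _ < ε := hN

end Abel

theorem abs_sum_range_sin_succ_mul_le {θ : ℝ} (hθ : 0 < sin (θ / 2)) (n : ℕ) :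
    |∑ i ∈ range n, sin ((i + 1) * θ)| ≤ 1 / sin (θ / 2) := by
  have htelescope : 2 * sin (θ / 2) * ∑ i ∈ range n, sin ((i + 1) * θ)
      = cos (θ / 2) - cos (n * θ + θ / 2) := by
    have hstep : ∀ i : ℕ, 2 * sin (θ / 2) * sin ((i + 1) * θ)
        = cos (i * θ + θ / 2) - cos ((i + 1 : ℕ) * θ + θ / 2) := fun i => by
      rw [two_mul_sin_mul_sin, ← cos_neg (θ / 2 - _)]
      push_cast
      ring_nf
    rw [mul_sum, sum_congr rfl fun i _ => hstep i,
      sum_range_sub' (fun i : ℕ => cos (i * θ + θ / 2))]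
    simp
  rw [le_div_iff₀ hθ, mul_comm]
  have hbound : |2 * sin (θ / 2) * ∑ i ∈ range n, sin ((i + 1) * θ)| ≤ 2 := by
    rw [htelescope]
    linarith [abs_sub (cos (θ / 2)) (cos (n * θ + θ / 2)), abs_cos_le_one (θ / 2),
      abs_cos_le_one (n * θ + θ / 2)]
  rw [abs_mul, abs_of_pos (by positivity : 0 < 2 * sin (θ / 2))] at hbound
  linarith

open Complex in
theorem hasSum_sin_nat_mul_div_mul_pow (θ : ℝ) {x : ℝ} (hx : |x| < 1) :
    HasSum (fun n : ℕ => Real.sin (n * θ) / n * x ^ n)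
      (-(log (1 - x * exp (θ * I))).im) := by
  have hz : ‖(x : ℂ) * exp (θ * I)‖ < 1 := by simpa using hx
  convert hasSum_im (hasSum_taylorSeries_neg_log hz) using 1
  · funext n
    rw [show ((x : ℂ) * exp (θ * I)) ^ n / n = ((x ^ n / n : ℝ) : ℂ) * exp ((n * θ : ℝ) * I) by
      rw [mul_pow, ← Complex.exp_nat_mul]; push_cast; ring_nf,
      im_ofReal_mul, exp_ofReal_mul_I_im]
    ring
  · simp

open Complex in
theorem Complex.one_sub_exp_mul_I {θ : ℝ} (hθ : 0 < Real.sin (θ / 2)) :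
    1 - exp (θ * I) = exp (Real.log (2 * Real.sin (θ / 2)) + (θ - π) / 2 * I) := by
  have hθw : exp (θ * I) = exp (θ / 2 * I) ^ 2 := by
    rw [← Complex.exp_nat_mul]; push_cast; ring_nf
  have hsin : Complex.sin (θ / 2) = ((exp (θ / 2 * I))⁻¹ - exp (θ / 2 * I)) * I / 2 := by
    rw [Complex.sin, neg_mul, Complex.exp_neg]
  rw [Complex.exp_add, ← ofReal_exp, Real.exp_log (by positivity),
    show (θ - π : ℂ) / 2 * I = θ / 2 * I - π / 2 * I by ring, Complex.exp_sub,
    exp_pi_div_two_mul_I, hθw]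
  push_cast
  rw [hsin]
  have hw : exp (θ / 2 * I) ≠ 0 := exp_ne_zero _
  field_simp

open Complex in
theorem tendsto_sum_range_sin_succ_mul_div {θ : ℝ} (hθ₀ : 0 < θ) (hθ : θ < 2 * π) :
    Tendsto (fun n => ∑ i ∈ range n, Real.sin ((i + 1) * θ) / (i + 1)) atTop
      (𝓝 ((π - θ) / 2)) := by
  have hsin : 0 < Real.sin (θ / 2) := Real.sin_pos_of_pos_of_lt_pi (by linarith) (by linarith)
  obtain ⟨l, hl⟩ : ∃ l, Tendsto (fun n => ∑ i ∈ range n, Real.sin ((i + 1) * θ) / (i + 1))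
      atTop (𝓝 l) := by
    refine cauchySeq_tendsto_of_complete ?_
    have hdirichlet := Antitone.cauchySeq_series_mul_of_tendsto_zero_of_bounded
      (f := fun i : ℕ => 1 / ((i : ℝ) + 1)) (fun m n hmn => by dsimp only; gcongr)
      tendsto_one_div_add_atTop_nhds_zero_nat
      fun n => (Real.norm_eq_abs _).trans_le (abs_sum_range_sin_succ_mul_le hsin n)
    simpa [div_eq_inv_mul] using hdirichlet
  have hshift : Tendsto (fun n => ∑ i ∈ range n, Real.sin (i * θ) / i) atTop (𝓝 l) := by
    rw [← tendsto_add_atTop_iff_nat 1]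
    simpa [sum_range_succ'] using hl
  have hclosed : Tendsto (fun x : ℝ => -(log (1 - x * exp (θ * I))).im) (𝓝[<] 1)
      (𝓝 ((π - θ) / 2)) := by
    have hslit : 1 - exp (θ * I) ∈ slitPlane := by
      refine mem_slitPlane_iff.2 (Or.inl ?_)
      have hcos : Real.cos θ ≠ 1 := fun h =>
        hθ₀.ne' ((Real.cos_eq_one_iff_of_lt_of_lt (by linarith) hθ).1 h)
      simpa using lt_of_le_of_ne (Real.cos_le_one θ) hcos
    have hcont : ContinuousAt (fun x : ℝ => -(log (1 - x * exp (θ * I))).im) 1 :=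
      (continuous_im.continuousAt.comp
        ((continuousAt_clog (by simpa using hslit)).comp (by fun_prop))).neg
    have hvalue : -(log (1 - ((1 : ℝ) : ℂ) * exp (θ * I))).im = (π - θ) / 2 := by
      rw [ofReal_one, one_mul, Complex.one_sub_exp_mul_I hsin, Complex.log_exp] <;> simp <;>
        linarith
    exact hvalue ▸ hcont.tendsto.mono_left nhdsWithin_le_nhds
  have habel := Real.tendsto_tsum_powerSeries_nhdsWithin_lt hshift
  have hpowerSeries : ∀ᶠ x : ℝ in 𝓝[<] 1, -(log (1 - x * exp (θ * I))).im
      = ∑' n : ℕ, Real.sin (n * θ) / n * x ^ n := by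
    filter_upwards [Ioo_mem_nhdsLT (show (-1 : ℝ) < 1 by norm_num)] with x hx
    exact (hasSum_sin_nat_mul_div_mul_pow θ (abs_lt.2 hx)).tsum_eq.symm
  rwa [tendsto_nhds_unique habel (hclosed.congr' hpowerSeries)] at hl

namespace Real

theorem le_mul_sinh_div {t x : ℝ} (ht : 0 < t) (hx : 0 ≤ x) : x ≤ t * sinh (x / t) :=
  calc x = t * (x / t) := (mul_div_cancel₀ x ht.ne').symm
    _ ≤ t * sinh (x / t) := by gcongr; exact self_le_sinh_iff.2 (by positivity)

theorem tendsto_mul_sinh_div_atTop (x : ℝ) :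
    Tendsto (fun t => t * sinh (x / t)) atTop (𝓝 x) := by
  have hderiv : HasDerivAt (fun y => sinh (x * y)) x 0 := by
    simpa using ((hasDerivAt_id (0 : ℝ)).const_mul x).sinh
  refine (hderiv.tendsto_slope_zero_right.comp tendsto_inv_atTop_nhdsGT_zero).congr fun t => ?_
  simp [div_eq_mul_inv]

theorem sq_div_four_le_sinh {x : ℝ} (hx : 0 ≤ x) : x ^ 2 / 4 ≤ sinh x := by
  rw [sinh_eq]
  linarith [quadratic_le_exp_of_nonneg hx, exp_le_one_iff.2 (neg_nonpos.2 hx)]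

theorem summable_inv_sinh_nat_succ_mul {y : ℝ} (hy : 0 < y) :
    Summable fun k : ℕ => (sinh ((k + 1) * y))⁻¹ := by
  have hsq : Summable fun k : ℕ => 4 / y ^ 2 * (1 / ((k + 1 : ℕ) : ℝ) ^ 2) :=
    ((summable_nat_add_iff 1).2 (summable_one_div_nat_pow.2 one_lt_two)).mul_left _
  refine Summable.of_nonneg_of_le (fun k => by positivity) (fun k => ?_) hsq
  have hk := sq_div_four_le_sinh (by positivity : 0 ≤ ((k : ℝ) + 1) * y)
  calc (sinh ((k + 1) * y))⁻¹ ≤ ((((k : ℝ) + 1) * y) ^ 2 / 4)⁻¹ := inv_anti₀ (by positivity) hk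
    _ = _ := by push_cast; field_simp

end Real

theorem tendsto_tsum_sin_succ_mul_div_mul_sinh {θ u : ℝ} (hθ₀ : 0 < θ) (hθ : θ < 2 * π)
    (hu : 0 < u) :
    Tendsto (fun t => ∑' k : ℕ, sin ((k + 1) * θ) / (t * sinh ((k + 1) * u / t))) atTop
      (𝓝 ((π - θ) / (2 * u))) := by
  have hsin : 0 < sin (θ / 2) := sin_pos_of_pos_of_lt_pi (by linarith) (by linarith)
  simp_rw [div_eq_mul_inv (sin _)]
  refine tendsto_tsum_mul_of_antitone (abs_sum_range_sin_succ_mul_le hsin)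
    (d := fun k => (((k : ℝ) + 1) * u)⁻¹) ?_
    (fun k => (tendsto_mul_sinh_div_atTop _).inv₀ (by positivity)) ?_ ?_
  · filter_upwards [eventually_gt_atTop 0] with t ht
    refine ⟨antitone_nat_of_succ_le fun k => ?_, fun k => by positivity,
      fun k => inv_anti₀ (by positivity) (le_mul_sinh_div ht (by positivity)), ?_⟩
    · refine inv_anti₀ (by positivity) (mul_le_mul_of_nonneg_left (sinh_le_sinh.2 ?_) ht.le)
      gcongr
      linarith
    · refine Summable.of_norm_bounded
        ((summable_inv_sinh_nat_succ_mul (div_pos hu ht)).mul_left t⁻¹) fun k => ?_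
      have hpos : 0 < (t * sinh ((k + 1) * u / t))⁻¹ := by positivity
      rw [norm_mul, Real.norm_of_nonneg hpos.le, Real.norm_eq_abs, mul_inv, mul_div_assoc]
      exact mul_le_of_le_one_left (by positivity) (abs_sin_le_one _)
  · exact tendsto_inv_atTop_zero.comp
      ((tendsto_natCast_atTop_atTop.atTop_add tendsto_const_nhds).atTop_mul_const hu)
  · convert (tendsto_sum_range_sin_succ_mul_div hθ₀ hθ).div_const u using 1
    · funext n
      rw [sum_div]
      refine sum_congr rfl fun i _ => ?_
      field_simp
    · field_simp

/-- For fixed `β ∈ [0,1)`, the series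
`∑_{k≥1} 2π sin(2kβπ)/((log q) sinh(2kπ²/log q))` converges, as `q → 0⁺`, to `1/2 - β` if
`β > 0`, and to `0` if `β = 0`. -/
theorem fourier_series_limit_q_to_zero (β : ℝ) (hβ0 : 0 ≤ β) (hβ1 : β < 1) :
    Tendsto
      (fun q : ℝ =>
        ∑' k : ℕ, 2 * π * Real.sin (2 * ((k : ℝ) + 1) * β * π) /
          (Real.log q * Real.sinh (2 * ((k : ℝ) + 1) * π ^ 2 / Real.log q)))
      (nhdsWithin 0 (Set.Ioo (0 : ℝ) 1))
      (nhds (if β = 0 then 0 else 1 / 2 - β)) := by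
  rcases hβ0.eq_or_lt with rfl | hβ
  · simp
  rw [if_neg hβ.ne']
  have hlog : Tendsto (fun q => -log q) (𝓝[Set.Ioo 0 1] 0) atTop :=
    tendsto_neg_atBot_atTop.comp
      (tendsto_log_nhdsGT_zero.mono_left (nhdsWithin_mono _ Set.Ioo_subset_Ioi_self))
  have hseries := ((tendsto_tsum_sin_succ_mul_div_mul_sinh (θ := 2 * β * π) (u := 2 * π ^ 2)
    (by positivity) (by nlinarith [pi_pos]) (by positivity)).comp hlog).const_mul (2 * π)
  convert hseries using 2 with q
  · rw [Function.comp_apply, ← tsum_mul_left]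
    refine tsum_congr fun k => ?_
    rw [div_neg, sinh_neg, neg_mul_neg]
    ring_nf
  · field_simp
end

section
/- Let 0 < q < 1 and define c(β, q) = 1 − 1/(1 + q^{−β}) − β − ∑_{ℓ≥0} 1/(1 + q^{−ℓ−β−1}) + ∑_{ℓ≥0} 1/(1 + q^{−ℓ+β−1}). Then (i) c(0, q) = 1/2 and c(1/2, q) = 1/2, and (ii) for every β ∈ (0,1), c(β, q) + c(1−β, q) = 1. -/
open Real

lemma summable_aux {q : ℝ} (hq0 : 0 < q) (hq1 : q < 1) (c : ℝ) :
    Summable (fun ℓ : ℕ => 1 / (1 + q ^ (-(ℓ : ℝ) + c))) := by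
  have hg : Summable (fun ℓ : ℕ => q ^ (-c) * q ^ ℓ) :=
    (summable_geometric_of_lt_one hq0.le hq1).mul_left _
  apply Summable.of_nonneg_of_le (fun ℓ => by positivity) _ hg
  intro ℓ
  have hx : (0:ℝ) < q ^ (-(ℓ : ℝ) + c) := rpow_pos_of_pos hq0 _
  calc 1 / (1 + q ^ (-(ℓ : ℝ) + c)) ≤ 1 / (q ^ (-(ℓ : ℝ) + c)) := by
        apply one_div_le_one_div_of_le hx; linarith
    _ = q ^ ((ℓ : ℝ) - c) := by
        rw [one_div, ← rpow_neg hq0.le]; ring_nf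
    _ = q ^ (-c) * q ^ ℓ := by
        rw [show (ℓ : ℝ) - c = -c + (ℓ : ℕ) by ring, rpow_add hq0,
          rpow_natCast]

lemma tsum_shift {q : ℝ} (hq0 : 0 < q) (hq1 : q < 1) (c : ℝ) :
    (∑' ℓ : ℕ, 1 / (1 + q ^ (-(ℓ : ℝ) + c)))
      = 1 / (1 + q ^ c) + ∑' ℓ : ℕ, 1 / (1 + q ^ (-(ℓ : ℝ) + (c - 1))) := by
  rw [Summable.tsum_eq_zero_add (summable_aux hq0 hq1 c)]
  congr 1
  · norm_num
  · apply tsum_congr; intro n; congr 2; push_cast; ring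

/-- For `0 < q < 1`: (i) `c(0, q) = 1/2` and `c(1/2, q) = 1/2`;
(ii) for every `β ∈ (0,1)`, `c(β, q) + c(1-β, q) = 1`. -/
theorem cConst_symmetry (q : ℝ) (hq0 : 0 < q) (hq1 : q < 1) :
    cConst q 0 = 1 / 2 ∧ cConst q (1 / 2) = 1 / 2 ∧
      ∀ β ∈ Set.Ioo (0 : ℝ) 1, cConst q β + cConst q (1 - β) = 1 := by
  set T : ℝ → ℝ := fun c => ∑' ℓ : ℕ, 1 / (1 + q ^ (-(ℓ : ℝ) + c)) with hT
  have hc : ∀ β : ℝ, cConst q β = 1 - 1 / (1 + q ^ (-β)) - β - T (-β - 1) + T (β - 1) := by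
    intro β
    have e1 : (∑' ℓ : ℕ, 1 / (1 + q ^ (-(ℓ : ℝ) - β - 1))) = T (-β - 1) :=
      tsum_congr fun ℓ => by rw [show -(ℓ:ℝ) - β - 1 = -(ℓ:ℝ) + (-β - 1) by ring]
    have e2 : (∑' ℓ : ℕ, 1 / (1 + q ^ (-(ℓ : ℝ) + β - 1))) = T (β - 1) :=
      tsum_congr fun ℓ => by rw [show -(ℓ:ℝ) + β - 1 = -(ℓ:ℝ) + (β - 1) by ring]
    rw [cConst, e1, e2]
  have hshift : ∀ c : ℝ, T c = 1 / (1 + q ^ c) + T (c - 1) := fun c =>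
    tsum_shift hq0 hq1 c
  refine ⟨?_, ?_, ?_⟩
  · rw [hc 0]
    norm_num
  · rw [hc (1/2)]
    have h := hshift (-(1/2))
    rw [show -(1/2 : ℝ) - 1 = -(1/2) - 1 by ring] at h
    rw [show (1:ℝ)/2 - 1 = -(1/2) by norm_num, h,
      show -(1/2 : ℝ) = -((1:ℝ)/2) by norm_num]
    ring
  · intro β _
    rw [hc β, hc (1 - β)]
    have h1 := hshift (β - 1)
    have h2 := hshift (-β)
    rw [show -(1 - β) - 1 = β - 1 - 1 by ring, show (1:ℝ) - β - 1 = -β by ring,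
      show -(1 - β) = β - 1 by ring]
    rw [h1, h2]
    ring
end

section
/- Let 0 < q < 1 and define c(β, q) = 1 − 1/(1 + q^{−β}) − β − ∑_{ℓ≥0} 1/(1 + q^{−ℓ−β−1}) + ∑_{ℓ≥0} 1/(1 + q^{−ℓ+β−1}). Then ⌊c(β, q) + β⌋ = 0 for 0 ≤ β < 1/2 and ⌊c(β, q) + β⌋ = 1 for 1/2 ≤ β < 1. More precisely, 1/2 ≤ c(β, q) + β < 1 for 0 ≤ β < 1/2, and 1 ≤ c(β, q) + β < 3/2 for 1/2 ≤ β < 1. -/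
noncomputable def hAux (q x : ℝ) : ℝ := 1 / (1 + q ^ (-x))

section aux
variable {q : ℝ}

lemma denom_pos (hq0 : 0 < q) (x : ℝ) : 0 < 1 + q ^ (-x) := by positivity

lemma hAux_pos (hq0 : 0 < q) (x : ℝ) : 0 < hAux q x := by
  unfold hAux; positivity

lemma hAux_le_rpow (hq0 : 0 < q) (x : ℝ) : hAux q x ≤ q ^ x := by
  unfold hAux
  rw [div_le_iff₀ (denom_pos hq0 x), mul_add, mul_one, ← Real.rpow_add hq0,
    add_neg_cancel, Real.rpow_zero]
  have : 0 ≤ q ^ x := (Real.rpow_pos_of_pos hq0 x).le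
  linarith

lemma hAux_anti (hq0 : 0 < q) (hq1 : q < 1) {x y : ℝ} (hxy : x ≤ y) : hAux q y ≤ hAux q x := by
  unfold hAux
  apply one_div_le_one_div_of_le (denom_pos hq0 x)
  have := Real.rpow_le_rpow_of_exponent_ge hq0 hq1.le (neg_le_neg hxy)
  linarith

lemma hAux_strict_anti (hq0 : 0 < q) (hq1 : q < 1) {x y : ℝ} (hxy : x < y) : hAux q y < hAux q x := by
  unfold hAux
  apply one_div_lt_one_div_of_lt (denom_pos hq0 x)
  have := Real.rpow_lt_rpow_of_exponent_gt hq0 hq1 (neg_lt_neg hxy)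
  linarith

lemma hAux_lt_half (hq0 : 0 < q) (hq1 : q < 1) {x : ℝ} (hx : 0 < x) : hAux q x < 1 / 2 := by
  have h1 : (1:ℝ) < q ^ (-x) := by
    have h := Real.rpow_lt_rpow_of_exponent_gt hq0 hq1 (neg_lt_zero.mpr hx)
    simpa using h
  unfold hAux
  rw [div_lt_div_iff₀ (denom_pos hq0 x) (by norm_num)]
  linarith

lemma hAux_le_half (hq0 : 0 < q) (hq1 : q < 1) {x : ℝ} (hx : 0 ≤ x) : hAux q x ≤ 1 / 2 := by
  have h1 : (1:ℝ) ≤ q ^ (-x) := by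
    have h := Real.rpow_le_rpow_of_exponent_ge hq0 hq1.le (neg_nonpos_of_nonneg hx)
    simpa using h
  unfold hAux
  rw [div_le_div_iff₀ (denom_pos hq0 x) (by norm_num)]
  linarith

lemma hAux_summable (hq0 : 0 < q) (hq1 : q < 1) (a : ℝ) : Summable (fun ℓ : ℕ => hAux q ((ℓ : ℝ) + a)) := by
  refine Summable.of_nonneg_of_le (f := fun ℓ : ℕ => q ^ a * q ^ ℓ)
    (fun n => (hAux_pos hq0 _).le) (fun n => ?_)
    ((summable_geometric_of_lt_one hq0.le hq1).mul_left _)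
  calc hAux q ((n : ℝ) + a) ≤ q ^ ((n : ℝ) + a) := hAux_le_rpow hq0 _
    _ = q ^ a * q ^ n := by
        rw [Real.rpow_add hq0, ← Real.rpow_natCast q n]; ring

lemma hAux_tsum_shift (hq0 : 0 < q) (hq1 : q < 1) (a : ℝ) :
    ∑' ℓ : ℕ, hAux q ((ℓ : ℝ) + a) = hAux q a + ∑' ℓ : ℕ, hAux q ((ℓ : ℝ) + (a + 1)) := by
  rw [Summable.tsum_eq_zero_add (hAux_summable hq0 hq1 a)]
  congr 1
  · norm_num
  · exact tsum_congr fun n => by congr 1; push_cast; ring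

end aux

/-- For `0 < q < 1`: if `0 ≤ β < 1/2` then
`1/2 ≤ c(β,q) + β < 1` and `⌊c(β,q) + β⌋ = 0`; if `1/2 ≤ β < 1` then
`1 ≤ c(β,q) + β < 3/2` and `⌊c(β,q) + β⌋ = 1`. -/
theorem cConst_add_beta_floor (q β : ℝ) (hq0 : 0 < q) (hq1 : q < 1) :
    (0 ≤ β → β < 1 / 2 →
        (1 / 2 ≤ cConst q β + β ∧ cConst q β + β < 1) ∧ ⌊cConst q β + β⌋ = 0) ∧
      (1 / 2 ≤ β → β < 1 →
        (1 ≤ cConst q β + β ∧ cConst q β + β < 3 / 2) ∧ ⌊cConst q β + β⌋ = 1) := by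
  have hc : cConst q β + β
      = 1 - hAux q β - (∑' ℓ : ℕ, hAux q ((ℓ : ℝ) + (β + 1)))
        + ∑' ℓ : ℕ, hAux q ((ℓ : ℝ) + (1 - β)) := by
    unfold cConst hAux
    have e1 : (∑' ℓ : ℕ, 1 / (1 + q ^ (-(ℓ : ℝ) - β - 1)))
        = ∑' ℓ : ℕ, 1 / (1 + q ^ (-((ℓ : ℝ) + (β + 1)))) := by
      apply tsum_congr; intro n; norm_num; ring_nf
    have e2 : (∑' ℓ : ℕ, 1 / (1 + q ^ (-(ℓ : ℝ) + β - 1)))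
        = ∑' ℓ : ℕ, 1 / (1 + q ^ (-((ℓ : ℝ) + (1 - β)))) := by
      apply tsum_congr; intro n; norm_num; ring_nf
    rw [e1, e2]; ring
  set A := ∑' ℓ : ℕ, hAux q ((ℓ : ℝ) + (β + 1)) with hA
  constructor
  · intro hβ0 hβh
    have hB_le_A : A ≤ ∑' ℓ : ℕ, hAux q ((ℓ : ℝ) + (1 - β)) := by
      apply Summable.tsum_le_tsum _ (hAux_summable hq0 hq1 _) (hAux_summable hq0 hq1 _)
      intro n
      exact hAux_anti hq0 hq1 (by linarith)
    have hhalf := hAux_le_half hq0 hq1 hβ0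
    have hlow : 1 / 2 ≤ cConst q β + β := by rw [hc]; linarith
    have hB_lt : (∑' ℓ : ℕ, hAux q ((ℓ : ℝ) + (1 - β))) < hAux q β + A := by
      have := hAux_tsum_shift hq0 hq1 β
      rw [← this]
      apply Summable.tsum_lt_tsum_of_nonneg (i := 0) (fun n => (hAux_pos hq0 _).le)
        (fun n => hAux_anti hq0 hq1 (by linarith)) _ (hAux_summable hq0 hq1 _)
      exact hAux_strict_anti hq0 hq1 (by norm_num; linarith)
    have hup : cConst q β + β < 1 := by rw [hc]; linarith
    refine ⟨⟨hlow, hup⟩, ?_⟩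
    rw [Int.floor_eq_iff]
    push_cast
    constructor <;> linarith
  · intro hβh hβ1
    have hB_ge : hAux q β + A ≤ ∑' ℓ : ℕ, hAux q ((ℓ : ℝ) + (1 - β)) := by
      rw [← hAux_tsum_shift hq0 hq1 β]
      apply Summable.tsum_le_tsum _ (hAux_summable hq0 hq1 _) (hAux_summable hq0 hq1 _)
      intro n
      exact hAux_anti hq0 hq1 (by linarith)
    have hlow : 1 ≤ cConst q β + β := by rw [hc]; linarith
    have hB_lt : (∑' ℓ : ℕ, hAux q ((ℓ : ℝ) + (1 - β))) < 1 / 2 + hAux q β + A := by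
      rw [hAux_tsum_shift hq0 hq1 (1 - β)]
      have h1 : hAux q (1 - β) < 1 / 2 := hAux_lt_half hq0 hq1 (by linarith)
      have h2 : (∑' ℓ : ℕ, hAux q ((ℓ : ℝ) + (1 - β + 1))) ≤ hAux q β + A := by
        rw [← hAux_tsum_shift hq0 hq1 β]
        apply Summable.tsum_le_tsum _ (hAux_summable hq0 hq1 _) (hAux_summable hq0 hq1 _)
        intro n
        exact hAux_anti hq0 hq1 (by linarith)
      linarith
    have hup : cConst q β + β < 3 / 2 := by rw [hc]; linarith
    refine ⟨⟨hlow, hup⟩, ?_⟩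
    rw [Int.floor_eq_iff]
    push_cast
    constructor <;> linarith
end

section
/- Let 0 < q < 1, β ∈ [0,1) with β ≠ 1/2, and let (n_k) be an increasing sequence of natural numbers with f : ℕ → ℝ such that f(n_k) → ∞, n_k − f(n_k) → ∞, and {f(n_k)} = β for all k. Let X_{n_k} ∼ KB(n_k, q^{−f(n_k)}, q) with mean μ_{n_k} = ∑_{i=0}^{n_k−1} 1/(1 + q^{f(n_k)−i}), and set δ = ⌊β + c(β, q)⌋ (so δ = 0 if β < 1/2 and δ = 1 if β > 1/2). Then for every integer x, P(X_{n_k} = ⌊μ_{n_k}⌋ + x) → e_q(q) · e_q(−q^{β}) · e_q(−q^{1−β}) · q^{(δ + x − 1)(δ + x − 2β)/2} as k → ∞. -/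
/-! Write `f(n_k) = m + β` with `m = ⌊f(n_k)⌋` and `θ = q^{-(m+β)}`. Splitting the normalising
product `∏_{i<n} (1 + θ q^i)` at `i = m` turns it into
`q^{-m(m+1)/2 - (m+1)β} (-q^β; q)_{m+1} (-q^{1-β}; q)_{n-m-1}`, and the power of `q` left over
in `P(X = m + j)` is exactly `q^{(j-1)(j-2β)/2}`; as `m` and `n - m` tend to infinity the
q-Pochhammer symbols converge to the infinite products defining `e_q`. The same splitting of the
mean gives `μ - m → β + c(β, q)`, which is not an integer when `β ≠ 1/2`, so eventually
`⌊μ⌋ = m + δ`. -/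

open Filter Finset

/-- The probability `P(X = y)` for `X ∼ KB(n, θ, q)`, extended by `0` outside `{0, …, n}`. -/
noncomputable def kbProb (q θ : ℝ) (n : ℕ) (y : ℤ) : ℝ :=
  if 0 ≤ y ∧ y ≤ (n : ℤ) then
    qBinom q n y.toNat * θ ^ y.toNat * q ^ (y.toNat * (y.toNat - 1) / 2) /
      ∏ i ∈ range n, (1 + θ * q ^ i)
  else 0

section QPochhammer

variable {q : ℝ}

lemma summable_norm_neg_mul_pow (hq : |q| < 1) (z : ℝ) :
    Summable fun i : ℕ => ‖-(z * q ^ i)‖ := by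
  simpa [abs_mul, abs_pow] using (summable_geometric_of_lt_one (abs_nonneg q) hq).mul_left |z|

lemma multipliable_one_sub_mul_pow (hq : |q| < 1) (z : ℝ) :
    Multipliable fun i : ℕ => 1 - z * q ^ i := by
  simpa [sub_eq_add_neg] using multipliable_one_add_of_summable (summable_norm_neg_mul_pow hq z)

lemma tendsto_qPoch (hq : |q| < 1) (z : ℝ) :
    Tendsto (qPoch q z) atTop (nhds (qExp q z)⁻¹) := by
  rw [qExp, inv_inv]
  exact (multipliable_one_sub_mul_pow hq z).hasProd.tendsto_prod_nat

lemma mul_pow_lt_one (hq0 : 0 ≤ q) (hq1 : q < 1) {z : ℝ} (hz : z < 1) (i : ℕ) :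
    z * q ^ i < 1 := by
  have hqi : q ^ i ≤ 1 := pow_le_one₀ hq0 hq1.le
  rcases le_or_gt z 0 with h | h
  · nlinarith [pow_nonneg hq0 i]
  · nlinarith

lemma qExp_ne_zero (hq0 : 0 ≤ q) (hq1 : q < 1) {z : ℝ} (hz : z < 1) : qExp q z ≠ 0 := by
  have hne := tprod_one_add_ne_zero_of_summable (fun i => by linarith [mul_pow_lt_one hq0 hq1 hz i])
    (summable_norm_neg_mul_pow (by rwa [abs_of_nonneg hq0]) z)
  simpa [qExp, sub_eq_add_neg] using hne

lemma tendsto_qBinom_s17 (hq0 : 0 ≤ q) (hq1 : q < 1) {n k : ℕ → ℕ}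
    (hk : Tendsto k atTop atTop) (hnk : Tendsto (fun t => n t - k t) atTop atTop) :
    Tendsto (fun t => qBinom q (n t) (k t)) atTop (nhds (qExp q q)) := by
  have hq : |q| < 1 := by rwa [abs_of_nonneg hq0]
  have hn : Tendsto n atTop atTop := tendsto_atTop_mono (fun t => Nat.sub_le _ _) hnk
  have hE : qExp q q ≠ 0 := qExp_ne_zero hq0 hq1 hq1
  have hlim : (qExp q q)⁻¹ / ((qExp q q)⁻¹ * (qExp q q)⁻¹) = qExp q q := by field_simp
  rw [← hlim]
  exact ((tendsto_qPoch hq q).comp hn).div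
    (((tendsto_qPoch hq q).comp hk).mul ((tendsto_qPoch hq q).comp hnk)) (by simpa using hE)

end QPochhammer

section KempSeries

variable {q : ℝ}

lemma one_div_one_add_rpow_strictMono (hq0 : 0 < q) (hq1 : q < 1) :
    StrictMono fun x : ℝ => 1 / (1 + q ^ x) := by
  intro a b hab
  have := Real.rpow_lt_rpow_of_exponent_gt hq0 hq1 hab
  have := Real.rpow_pos_of_pos hq0 b
  exact one_div_lt_one_div_of_lt (by linarith) (by linarith)

lemma one_div_one_add_rpow_neg (hq0 : 0 < q) (x : ℝ) :
    1 / (1 + q ^ (-x)) = 1 - 1 / (1 + q ^ x) := by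
  have hx := Real.rpow_pos_of_pos hq0 x
  rw [Real.rpow_neg hq0.le]
  field_simp
  ring

noncomputable def kempTerm (q a : ℝ) (ℓ : ℕ) : ℝ := 1 / (1 + q ^ (-(ℓ : ℝ) - a))

noncomputable def kempSeries (q a : ℝ) : ℝ := ∑' ℓ, kempTerm q a ℓ

lemma kempTerm_succ (q a : ℝ) (ℓ : ℕ) : kempTerm q a (ℓ + 1) = kempTerm q (a + 1) ℓ := by
  rw [kempTerm, kempTerm]
  push_cast
  ring_nf

lemma kempTerm_le_geometric (hq0 : 0 < q) (a : ℝ) (ℓ : ℕ) :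
    kempTerm q a ℓ ≤ q ^ a * q ^ ℓ := by
  have hx := Real.rpow_pos_of_pos hq0 (-(ℓ : ℝ) - a)
  have hinv : q ^ a * q ^ ℓ = (q ^ (-(ℓ : ℝ) - a))⁻¹ := by
    rw [← Real.rpow_neg hq0.le, ← Real.rpow_natCast, ← Real.rpow_add hq0]
    ring_nf
  rw [hinv, kempTerm, one_div]
  exact inv_anti₀ hx (by linarith)

lemma summable_kempTerm (hq0 : 0 < q) (hq1 : q < 1) (a : ℝ) : Summable (kempTerm q a) := by
  refine Summable.of_nonneg_of_le (fun ℓ => ?_) (kempTerm_le_geometric hq0 a)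
    ((summable_geometric_of_lt_one hq0.le hq1).mul_left _)
  have := Real.rpow_pos_of_pos hq0 (-(ℓ : ℝ) - a)
  rw [kempTerm]
  positivity

lemma kempSeries_strictAnti (hq0 : 0 < q) (hq1 : q < 1) : StrictAnti (kempSeries q) := by
  intro a b hab
  have hmono := one_div_one_add_rpow_strictMono hq0 hq1
  exact Summable.tsum_lt_tsum (fun ℓ => hmono.monotone (by linarith)) (i := 0)
    (hmono (by linarith)) (summable_kempTerm hq0 hq1 b) (summable_kempTerm hq0 hq1 a)

lemma kempSeries_eq_add_succ (hq0 : 0 < q) (hq1 : q < 1) (a : ℝ) :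
    kempSeries q a = 1 / (1 + q ^ (-a)) + kempSeries q (a + 1) := by
  rw [kempSeries, (summable_kempTerm hq0 hq1 a).tsum_eq_zero_add, kempSeries]
  simp only [kempTerm_succ]
  simp [kempTerm]

lemma add_cConst_eq (hq0 : 0 < q) (hq1 : q < 1) (β : ℝ) :
    β + cConst q β = 1 - kempSeries q β + kempSeries q (1 - β) := by
  have hS : ∑' ℓ : ℕ, 1 / (1 + q ^ (-(ℓ : ℝ) - β - 1)) = kempSeries q (β + 1) :=
    tsum_congr fun ℓ => by rw [kempTerm]; ring_nf
  have hT : ∑' ℓ : ℕ, 1 / (1 + q ^ (-(ℓ : ℝ) + β - 1)) = kempSeries q (1 - β) :=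
    tsum_congr fun ℓ => by rw [kempTerm]; ring_nf
  rw [cConst, hS, hT, kempSeries_eq_add_succ hq0 hq1 β]
  ring

/-- `kempSeries q` is strictly decreasing with `kempSeries q a - kempSeries q (a + 1) ∈ (0, 1)`,
which places `β + c(β, q)` in `(0, 1)` for `β < 1/2` and in `(1, 2)` for `β > 1/2`. -/
lemma add_cConst_ne_intCast (hq0 : 0 < q) (hq1 : q < 1) {β : ℝ} (hβ0 : 0 ≤ β) (hβ1 : β ≤ 1)
    (hβhalf : β ≠ 1 / 2) (n : ℤ) : β + cConst q β ≠ n := by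
  have hanti := kempSeries_strictAnti hq0 hq1
  have hstep : ∀ a, kempSeries q (a + 1) < kempSeries q a ∧
      kempSeries q a < kempSeries q (a + 1) + 1 := fun a => by
    have h0 := Real.rpow_pos_of_pos hq0 (-a)
    have h1 : 1 / (1 + q ^ (-a)) < 1 := by rw [div_lt_one (by linarith)]; linarith
    have h2 : 0 < 1 / (1 + q ^ (-a)) := by positivity
    constructor <;> linarith [kempSeries_eq_add_succ hq0 hq1 a]
  rw [add_cConst_eq hq0 hq1 β]
  intro hn
  rcases hβhalf.lt_or_gt with hβ | hβ
  · have h1 := hanti (show β < 1 - β by linarith)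
    have h2 := hanti.antitone (show 1 - β ≤ β + 1 by linarith)
    have h3 : (0 : ℝ) < n := by linarith [hstep β]
    have h4 : (n : ℝ) < 1 := by linarith
    have : (0 : ℤ) < n ∧ n < 1 := ⟨by exact_mod_cast h3, by exact_mod_cast h4⟩
    omega
  · have h1 := hanti (show 1 - β < β by linarith)
    have h2 := hanti.antitone (show β ≤ 1 - β + 1 by linarith)
    have h3 : (1 : ℝ) < n := by linarith
    have h4 : (n : ℝ) < 2 := by linarith [hstep (1 - β)]
    have : (1 : ℤ) < n ∧ n < 2 := ⟨by exact_mod_cast h3, by exact_mod_cast h4⟩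
    omega

end KempSeries

section KempProbability

variable {q : ℝ}

lemma sum_one_div_one_add_rpow_split (hq0 : 0 < q) (β : ℝ) (m r : ℕ) :
    ∑ i ∈ range (m + 1 + r), 1 / (1 + q ^ (((m : ℝ) + β) - i))
      = (m + 1) - ∑ ℓ ∈ range (m + 1), kempTerm q β ℓ
        + ∑ ℓ ∈ range r, kempTerm q (1 - β) ℓ := by
  have hlow : ∀ ℓ ∈ range (m + 1),
      1 / (1 + q ^ (((m : ℝ) + β) - ((m + 1 - 1 - ℓ : ℕ) : ℝ))) = 1 - kempTerm q β ℓ := by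
    intro ℓ hℓ
    have hℓm : ℓ ≤ m := Nat.lt_succ_iff.mp (mem_range.mp hℓ)
    rw [Nat.add_sub_cancel, Nat.cast_sub hℓm, kempTerm, ← one_div_one_add_rpow_neg hq0]
    ring_nf
  have hhigh : ∀ ℓ ∈ range r,
      1 / (1 + q ^ (((m : ℝ) + β) - ((m + 1 + ℓ : ℕ) : ℝ))) = kempTerm q (1 - β) ℓ := by
    intro ℓ _
    rw [kempTerm]
    push_cast
    ring_nf
  rw [sum_range_add, ← sum_range_reflect, sum_congr rfl hlow, sum_congr rfl hhigh,
    sum_sub_distrib, sum_const, card_range, nsmul_eq_mul]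
  push_cast
  ring

lemma sum_range_neg_natCast_sub (β : ℝ) (m : ℕ) :
    ∑ ℓ ∈ range (m + 1), (-(ℓ : ℝ) - β) = -((m : ℝ) * (m + 1) / 2 + (m + 1) * β) := by
  induction m with
  | zero => simp
  | succ m ih => rw [sum_range_succ, ih]; push_cast; ring

lemma prod_one_add_rpow_mul_pow_split (hq0 : 0 < q) (β : ℝ) (m r : ℕ) :
    ∏ i ∈ range (m + 1 + r), (1 + q ^ (-((m : ℝ) + β)) * q ^ i)
      = q ^ (-((m : ℝ) * (m + 1) / 2 + (m + 1) * β))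
        * qPoch q (-q ^ β) (m + 1) * qPoch q (-q ^ (1 - β)) r := by
  have hq : q ≠ 0 := hq0.ne'
  have hlow : ∀ ℓ ∈ range (m + 1),
      1 + q ^ (-((m : ℝ) + β)) * q ^ (m + 1 - 1 - ℓ)
        = q ^ (-(ℓ : ℝ) - β) * (1 - (-q ^ β) * q ^ ℓ) := by
    intro ℓ hℓ
    have hℓm : ℓ ≤ m := Nat.lt_succ_iff.mp (mem_range.mp hℓ)
    have h1 : q ^ (-((m : ℝ) + β)) * q ^ (m - ℓ) = q ^ (-(ℓ : ℝ) - β) := by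
      rw [← Real.rpow_add_natCast hq, Nat.cast_sub hℓm]
      ring_nf
    have h2 : q ^ (-(ℓ : ℝ) - β) * (q ^ β * q ^ ℓ) = 1 := by
      rw [← Real.rpow_add_natCast hq, ← Real.rpow_add hq0]
      ring_nf
      exact Real.rpow_zero q
    rw [Nat.add_sub_cancel, h1]
    linear_combination -h2
  have hhigh : ∀ ℓ ∈ range r,
      1 + q ^ (-((m : ℝ) + β)) * q ^ (m + 1 + ℓ) = 1 - (-q ^ (1 - β)) * q ^ ℓ := by
    intro ℓ _
    have h : q ^ (-((m : ℝ) + β)) * q ^ (m + 1 + ℓ) = q ^ (1 - β) * q ^ ℓ := by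
      rw [← Real.rpow_add_natCast hq, ← Real.rpow_add_natCast hq]
      push_cast
      ring_nf
    linear_combination h
  rw [prod_range_add, ← prod_range_reflect, prod_congr rfl hlow, prod_congr rfl hhigh,
    prod_mul_distrib, ← Real.rpow_sum_of_pos hq0, sum_range_neg_natCast_sub, qPoch, qPoch]

lemma qPoch_pos_of_nonpos (hq0 : 0 ≤ q) {z : ℝ} (hz : z ≤ 0) (n : ℕ) : 0 < qPoch q z n :=
  prod_pos fun i _ => by nlinarith [pow_nonneg hq0 i]

lemma kbProb_rpow_neg_eq (hq0 : 0 < q) (β : ℝ) (m r : ℕ) {j : ℤ} (hj0 : 0 ≤ (m : ℤ) + j)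
    (hjn : (m : ℤ) + j ≤ ((m + 1 + r : ℕ) : ℤ)) :
    kbProb q (q ^ (-((m : ℝ) + β))) (m + 1 + r) (m + j)
      = qBinom q (m + 1 + r) ((m : ℤ) + j).toNat * q ^ (((j : ℝ) - 1) * (j - 2 * β) / 2)
        / (qPoch q (-q ^ β) (m + 1) * qPoch q (-q ^ (1 - β)) r) := by
  set y := ((m : ℤ) + j).toNat
  have hy : (y : ℝ) = m + j := by exact_mod_cast Int.toNat_of_nonneg hj0
  have hpow : (q ^ (-((m : ℝ) + β))) ^ y * q ^ (y * (y - 1) / 2)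
      = q ^ (((j : ℝ) - 1) * (j - 2 * β) / 2) * q ^ (-((m : ℝ) * (m + 1) / 2 + (m + 1) * β)) := by
    rw [← Real.rpow_mul_natCast hq0.le, ← Nat.choose_two_right, ← Real.rpow_natCast,
      Nat.cast_choose_two, ← Real.rpow_add hq0, ← Real.rpow_add hq0, hy]
    ring_nf
  have hA := qPoch_pos_of_nonpos hq0.le (neg_nonpos.2 (Real.rpow_pos_of_pos hq0 β).le) (m + 1)
  have hB := qPoch_pos_of_nonpos hq0.le (neg_nonpos.2 (Real.rpow_pos_of_pos hq0 (1 - β)).le) r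
  have hE := Real.rpow_pos_of_pos hq0 (-((m : ℝ) * (m + 1) / 2 + (m + 1) * β))
  rw [kbProb, if_pos ⟨hj0, hjn⟩, prod_one_add_rpow_mul_pow_split hq0, mul_assoc, hpow]
  field_simp
  rfl

end KempProbability

section Asymptotics

variable {q : ℝ}

lemma eventually_floor_eq_of_tendsto {ι : Type*} {l : Filter ι} {a : ι → ℝ} {g : ℝ}
    (h : Tendsto a l (nhds g)) (hg : ∀ n : ℤ, g ≠ n) : ∀ᶠ k in l, ⌊a k⌋ = ⌊g⌋ := by
  have hlt : (⌊g⌋ : ℝ) < g := (Int.floor_le g).lt_of_ne (hg _).symm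
  filter_upwards [h (Ioo_mem_nhds hlt (Int.lt_floor_add_one g))] with k hk
  exact Int.floor_eq_iff.2 ⟨hk.1.le, hk.2⟩

lemma tendsto_sub_succ_of_tendsto_sub {M N : ℕ → ℕ} {a : ℕ → ℝ}
    (h : Tendsto (fun k => (N k : ℝ) - a k) atTop atTop) (hMa : ∀ᶠ k in atTop, (M k : ℝ) ≤ a k) :
    Tendsto (fun k => N k - (M k + 1)) atTop atTop := by
  rw [← tendsto_natCast_atTop_iff (R := ℝ)]
  refine tendsto_atTop_mono' atTop ?_ (tendsto_atTop_add_const_right _ (-1) h)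
  filter_upwards [hMa] with k hk
  have : (N k : ℝ) ≤ ((N k - (M k + 1) : ℕ) : ℝ) + M k + 1 := by
    exact_mod_cast (show N k ≤ N k - (M k + 1) + M k + 1 by omega)
  linarith

lemma tendsto_sum_one_div_one_add_rpow_sub (hq0 : 0 < q) (hq1 : q < 1) (β : ℝ) {M N : ℕ → ℕ}
    (hM : Tendsto M atTop atTop) (hNM : Tendsto (fun k => N k - (M k + 1)) atTop atTop) :
    Tendsto (fun k => ∑ i ∈ range (N k), 1 / (1 + q ^ (((M k : ℝ) + β) - i)) - M k) atTop
      (nhds (β + cConst q β)) := by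
  have hS := (summable_kempTerm hq0 hq1 β).hasSum.tendsto_sum_nat.comp
    ((tendsto_add_atTop_nat 1).comp hM)
  have hT := (summable_kempTerm hq0 hq1 (1 - β)).hasSum.tendsto_sum_nat.comp hNM
  rw [add_cConst_eq hq0 hq1]
  refine ((tendsto_const_nhds.sub hS).add hT).congr' ?_
  filter_upwards [hNM.eventually_ge_atTop 1] with k hk
  obtain ⟨r, hr⟩ : ∃ r, N k = M k + 1 + r := ⟨N k - (M k + 1), by omega⟩
  simp only [Function.comp, hr, Nat.add_sub_cancel_left, sum_one_div_one_add_rpow_split hq0]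
  ring

lemma tendsto_kbProb_rpow_neg (hq0 : 0 < q) (hq1 : q < 1) (β : ℝ) {M N : ℕ → ℕ}
    (hM : Tendsto M atTop atTop) (hNM : Tendsto (fun k => N k - (M k + 1)) atTop atTop)
    (j : ℤ) :
    Tendsto (fun k => kbProb q (q ^ (-((M k : ℝ) + β))) (N k) (M k + j)) atTop
      (nhds (qExp q q * qExp q (-q ^ β) * qExp q (-q ^ (1 - β))
        * q ^ (((j : ℝ) - 1) * (j - 2 * β) / 2))) := by
  have hq : |q| < 1 := by rwa [abs_of_pos hq0]
  have hY : Tendsto (fun k => ((M k : ℤ) + j).toNat) atTop atTop :=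
    tendsto_atTop.2 fun C => (tendsto_atTop.1 hM (C + (-j).toNat)).mono fun k hk => by omega
  have hNY : Tendsto (fun k => N k - ((M k : ℤ) + j).toNat) atTop atTop :=
    tendsto_atTop.2 fun C => (tendsto_atTop.1 hNM (C + j.toNat)).mono fun k hk => by omega
  have hden := ((tendsto_qPoch hq (-q ^ β)).comp ((tendsto_add_atTop_nat 1).comp hM)).mul
    ((tendsto_qPoch hq (-q ^ (1 - β))).comp hNM)
  have hA := qExp_ne_zero hq0.le hq1 (by linarith [Real.rpow_pos_of_pos hq0 β] : -q ^ β < 1)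
  have hB := qExp_ne_zero hq0.le hq1
    (by linarith [Real.rpow_pos_of_pos hq0 (1 - β)] : -q ^ (1 - β) < 1)
  have hlim := ((tendsto_qBinom_s17 hq0.le hq1 hY hNY).mul_const
    (q ^ (((j : ℝ) - 1) * (j - 2 * β) / 2))).div hden (by simp [hA, hB])
  rw [show qExp q q * qExp q (-q ^ β) * qExp q (-q ^ (1 - β)) *
      q ^ (((j : ℝ) - 1) * (j - 2 * β) / 2) = qExp q q * q ^ (((j : ℝ) - 1) * (j - 2 * β) / 2)
        / ((qExp q (-q ^ β))⁻¹ * (qExp q (-q ^ (1 - β)))⁻¹) by field_simp]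
  refine hlim.congr' ?_
  filter_upwards [hM.eventually_ge_atTop (-j).toNat, hNM.eventually_ge_atTop (j.toNat + 1)]
    with k hk1 hk2
  obtain ⟨r, hr⟩ : ∃ r, N k = M k + 1 + r := ⟨N k - (M k + 1), by omega⟩
  simp only [Pi.div_apply, Function.comp, hr, Nat.add_sub_cancel_left]
  rw [kbProb_rpow_neg_eq hq0 β (M k) r (by omega) (by push_cast; omega)]

end Asymptotics

theorem kemp_to_discrete_normal_general (q β : ℝ) (hq0 : 0 < q) (hq1 : q < 1)
    (hβ0 : 0 ≤ β) (hβ1 : β < 1) (hβhalf : β ≠ 1 / 2)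
    (nseq : ℕ → ℕ) (f : ℕ → ℝ)
    (hf : Tendsto (fun k => f (nseq k)) atTop atTop)
    (hnf : Tendsto (fun k => (nseq k : ℝ) - f (nseq k)) atTop atTop)
    (hfrac : ∀ k, Int.fract (f (nseq k)) = β)
    (μ : ℕ → ℝ)
    (hμ : ∀ k, μ k = ∑ i ∈ range (nseq k), 1 / (1 + q ^ (f (nseq k) - (i : ℝ))))
    (δ : ℤ) (hδ : δ = ⌊β + cConst q β⌋) :
    ∀ x : ℤ,
      Tendsto (fun k => kbProb q (q ^ (-f (nseq k))) (nseq k) (⌊μ k⌋ + x)) atTop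
        (nhds (qExp q q * qExp q (-q ^ β) * qExp q (-q ^ (1 - β)) *
          q ^ ((((δ : ℝ) + (x : ℝ) - 1) * ((δ : ℝ) + (x : ℝ) - 2 * β)) / 2))) := by
  intro x
  set M : ℕ → ℕ := fun k => ⌊f (nseq k)⌋₊
  have hfM : ∀ᶠ k in atTop, f (nseq k) = M k + β := by
    filter_upwards [hf.eventually_ge_atTop 0] with k hk
    rw [← hfrac k, natCast_floor_eq_intCast_floor hk, Int.floor_add_fract]
  have hM : Tendsto M atTop atTop := tendsto_nat_floor_atTop.comp hf
  have hNM : Tendsto (fun k => nseq k - (M k + 1)) atTop atTop :=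
    tendsto_sub_succ_of_tendsto_sub hnf (hfM.mono fun k hk => by linarith)
  have hmean : Tendsto (fun k => μ k - M k) atTop (nhds (β + cConst q β)) := by
    refine (tendsto_sum_one_div_one_add_rpow_sub hq0 hq1 β hM hNM).congr' ?_
    filter_upwards [hfM] with k hk
    rw [hμ, hk]
  have hfloor : ∀ᶠ k in atTop, ⌊μ k⌋ + x = M k + (δ + x) := by
    filter_upwards [eventually_floor_eq_of_tendsto hmean
      (add_cConst_ne_intCast hq0 hq1 hβ0 hβ1.le hβhalf)] with k hk
    rw [Int.floor_sub_natCast, ← hδ] at hk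
    omega
  have hlim := tendsto_kbProb_rpow_neg hq0 hq1 β hM hNM (δ + x)
  push_cast at hlim
  refine hlim.congr' ?_
  filter_upwards [hfM, hfloor] with k hk1 hk2
  rw [hk1, hk2]

/-- Along a subsequence `n_k` with `{f(n_k)} = β` constant (`β ≠ 1/2`),
`f(n_k) → ∞` and `n_k - f(n_k) → ∞`, the Kemp probabilities `P(X_{n_k} = ⌊μ_{n_k}⌋ + x)`
for `X_{n_k} ∼ KB(n_k, q^{-f(n_k)}, q)` converge, for every integer `x`, to
`e_q(q) e_q(-q^β) e_q(-q^{1-β}) q^{(δ+x-1)(δ+x-2β)/2}` where `δ = ⌊β + c(β,q)⌋`. -/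
theorem kemp_to_discrete_normal (q β : ℝ) (hq0 : 0 < q) (hq1 : q < 1)
    (hβ0 : 0 ≤ β) (hβ1 : β < 1) (hβhalf : β ≠ 1 / 2)
    (nseq : ℕ → ℕ) (hmono : StrictMono nseq) (f : ℕ → ℝ)
    (hf : Tendsto (fun k => f (nseq k)) atTop atTop)
    (hnf : Tendsto (fun k => (nseq k : ℝ) - f (nseq k)) atTop atTop)
    (hfrac : ∀ k, Int.fract (f (nseq k)) = β)
    (μ : ℕ → ℝ)
    (hμ : ∀ k, μ k = ∑ i ∈ range (nseq k), 1 / (1 + q ^ (f (nseq k) - (i : ℝ))))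
    (δ : ℤ) (hδ : δ = ⌊β + cConst q β⌋) :
    ∀ x : ℤ,
      Tendsto (fun k => kbProb q (q ^ (-f (nseq k))) (nseq k) (⌊μ k⌋ + x)) atTop
        (nhds (qExp q q * qExp q (-q ^ β) * qExp q (-q ^ (1 - β)) *
          q ^ ((((δ : ℝ) + (x : ℝ) - 1) * ((δ : ℝ) + (x : ℝ) - 2 * β)) / 2))) :=
  kemp_to_discrete_normal_general q β hq0 hq1 hβ0 hβ1 hβhalf nseq f hf hnf hfrac μ hμ δ hδ
end
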